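/- arXiv:2105.00177 — 5 statements merged into one kernel-verified Lean document; each statement's English description precedes it below -/
import Mathlib

section
/- Let G = C₁H₁ where C₁ ∈ ℝ^{K×R} is nonnegative and separable and H₁ ∈ ℝ^{R×m} is nonnegative with rank R. Then for any other factorization G = C₂H₂ in which C₂ ∈ ℝ^{K×R} is nonnegative and separable and H₂ ∈ ℝ^{R×m} is nonnegative with rank R, there exist a permutation matrix Π ∈ ℝ^{R×R} and a diagonal matrix Λ ∈ ℝ^{R×R} with strictly positive diagonal entries such that C₂ = C₁ΠΛ and H₂ = Λ⁻¹Πᵀ H₁. (This is the identifiability content of Theorem 1: under the separability assumption on the PSD matrix and generic spatial loss functions, the factors C and H of the sensed data matrix G = CH are identifiable up to a common permutation and positive diagonal scaling.) -/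
/-!
Reading `C₁ H₁ = C₂ H₂` at the separating rows of `C₂` expresses every row of `H₂` as a
nonnegative combination of rows of `H₁`, so `H₂ = A H₁` with `A ≥ 0`; symmetrically `H₁ = B H₂`
with `B ≥ 0`. As `H₂` has full row rank it can be cancelled on the right, giving `A B = 1`.
A nonnegative matrix with nonnegative inverse is a permutation matrix times a positive diagonal:
the vanishing off-diagonal entries of the nonnegative sums `(B A) i j` show that `B i k > 0`
confines row `k` of `A` to column `i`, and then `(A B) k k = 1` leaves room for only one
positive entry in row `i` of `B`. Cancelling `H₂` once more gives `C₂ = C₁ B`.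
-/

/-- A nonnegative matrix `C ∈ ℝ^{K×R}` is *separable* if for every column `r` there is a
row index `f_r` such that `C f_r r > 0` and `C f_r k = 0` for all `k ≠ r`. -/
def Separable {K R : ℕ} (C : Matrix (Fin K) (Fin R) ℝ) : Prop :=
  ∀ r : Fin R, ∃ f : Fin K, 0 < C f r ∧ ∀ k : Fin R, k ≠ r → C f k = 0

open Matrix

namespace Matrix

theorem eq_of_mul_eq_mul_of_rank_eq_card {l m n K : Type*} [Fintype m] [Fintype n] [Field K]
    {H : Matrix m n K} (hH : H.rank = Fintype.card m) {M N : Matrix l m K}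
    (h : M * H = N * H) : M = N := by
  have hrows : LinearIndependent K H.row := by
    rw [linearIndependent_iff_card_eq_finrank_span, Set.finrank, ← rank_eq_finrank_span_row, hH]
  funext i
  exact vecMul_injective_iff.mpr hrows (congrFun h i)

section NonnegInverse

variable {n 𝕜 : Type*} [Fintype n] [DecidableEq n] [Field 𝕜] [LinearOrder 𝕜]
  [IsStrictOrderedRing 𝕜] {A B : Matrix n n 𝕜}

theorem apply_eq_zero_of_mul_eq_one_of_pos (hA : ∀ i j, 0 ≤ A i j) (hB : ∀ i j, 0 ≤ B i j)
    (hBA : B * A = 1) {i k : n} (hik : 0 < B i k) {j : n} (hji : j ≠ i) : A k j = 0 := by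
  have hsum : ∑ l, B i l * A l j = 0 := by
    rw [← mul_apply, hBA, one_apply_ne hji.symm]
  have hterm := (Finset.sum_eq_zero_iff_of_nonneg fun l _ ↦ mul_nonneg (hB i l) (hA l j)).mp
    hsum k (Finset.mem_univ k)
  exact (mul_eq_zero.mp hterm).resolve_left hik.ne'

theorem pos_of_mul_eq_one_of_pos (hA : ∀ i j, 0 ≤ A i j) (hB : ∀ i j, 0 ≤ B i j)
    (hAB : A * B = 1) {i k : n} (hik : 0 < B i k) : 0 < A k i := by
  have hBA : B * A = 1 := mul_eq_one_comm.mp hAB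
  have hkk : A k i * B i k = 1 := by
    rw [← one_apply_eq k, ← hAB, mul_apply, Finset.sum_eq_single i]
    · intro j _ hji
      rw [apply_eq_zero_of_mul_eq_one_of_pos hA hB hBA hik hji, zero_mul]
    · simp
  exact (hA k i).lt_of_ne' (left_ne_zero_of_mul_eq_one hkk)

theorem eq_of_mul_eq_one_of_pos (hA : ∀ i j, 0 ≤ A i j) (hB : ∀ i j, 0 ≤ B i j)
    (hAB : A * B = 1) {i k l : n} (hik : 0 < B i k) (hil : 0 < B i l) : l = k := by
  by_contra hlk
  exact hil.ne' (apply_eq_zero_of_mul_eq_one_of_pos hB hA hAB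
    (pos_of_mul_eq_one_of_pos hA hB hAB hik) hlk)

theorem exists_perm_diagonal_of_mul_eq_one (hA : ∀ i j, 0 ≤ A i j) (hB : ∀ i j, 0 ≤ B i j)
    (hAB : A * B = 1) :
    ∃ (σ : Equiv.Perm n) (d : n → 𝕜), (∀ i, 0 < d i) ∧ B = σ.permMatrix 𝕜 * diagonal d := by
  have hBA : B * A = 1 := mul_eq_one_comm.mp hAB
  have hrow : ∀ i, ∃ k, 0 < B i k := by
    intro i
    by_contra! hzero
    have : (B * A) i i = 0 := Finset.sum_eq_zero fun k _ ↦ by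
      simp [le_antisymm (hzero k) (hB i k)]
    simp [hBA] at this
  choose τ hτ using hrow
  have hτinj : Function.Injective τ := fun i i' h ↦
    eq_of_mul_eq_one_of_pos hB hA hBA (pos_of_mul_eq_one_of_pos hA hB hAB (hτ i'))
      (h ▸ pos_of_mul_eq_one_of_pos hA hB hAB (hτ i))
  set σ := Equiv.ofBijective τ (Finite.injective_iff_bijective.mp hτinj)
  refine ⟨σ, fun k ↦ B (σ.symm k) k, fun k ↦ ?_, ?_⟩
  · convert hτ (σ.symm k)
    exact (σ.apply_symm_apply k).symm
  ext i k
  simp only [mul_diagonal, Equiv.Perm.permMatrix, PEquiv.toMatrix_apply, Equiv.toPEquiv_apply,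
    Option.mem_def, Option.some_inj]
  by_cases hk : σ i = k
  · subst hk
    simp
  · rw [if_neg hk, zero_mul]
    refine le_antisymm (not_lt.mp fun hpos ↦ hk ?_) (hB i k)
    exact (eq_of_mul_eq_one_of_pos hA hB hAB (hτ i) hpos).symm

end NonnegInverse

theorem inv_permMatrix_mul_diagonal {n K : Type*} [Fintype n] [DecidableEq n] [Field K]
    (σ : Equiv.Perm n) {d : n → K} (hd : ∀ i, d i ≠ 0) :
    (σ.permMatrix K * diagonal d)⁻¹ = (diagonal d)⁻¹ * (σ.permMatrix K)ᵀ := by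
  have hunit : IsUnit d := Pi.isUnit_iff.mpr fun i ↦ (hd i).isUnit
  refine inv_eq_left_inv ?_
  rw [inv_diagonal, transpose_permMatrix, Matrix.mul_assoc,
    ← Matrix.mul_assoc _ (σ.permMatrix K), ← permMatrix_mul, mul_inv_cancel, permMatrix_one,
    Matrix.one_mul, diagonal_mul_diagonal, ← Pi.mul_def, Ring.inverse_mul_cancel _ hunit,
    Pi.one_def, diagonal_one]

end Matrix

theorem Separable.exists_nonneg_mul_eq {K R₁ R₂ : ℕ} {n : Type*}
    {C₁ : Matrix (Fin K) (Fin R₁) ℝ} {C₂ : Matrix (Fin K) (Fin R₂) ℝ}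
    {H₁ : Matrix (Fin R₁) n ℝ} {H₂ : Matrix (Fin R₂) n ℝ}
    (hC₁ : ∀ i j, 0 ≤ C₁ i j) (hC₂ : Separable C₂) (h : C₁ * H₁ = C₂ * H₂) :
    ∃ A : Matrix (Fin R₂) (Fin R₁) ℝ, (∀ i j, 0 ≤ A i j) ∧ H₂ = A * H₁ := by
  choose f hpos hzero using hC₂
  refine ⟨of fun r k ↦ C₁ (f r) k / C₂ (f r) r,
    fun r k ↦ div_nonneg (hC₁ _ _) (hpos r).le, ?_⟩
  ext r j
  have hrow : C₂ (f r) r * H₂ r j = ∑ k, C₁ (f r) k * H₁ k j := by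
    rw [← mul_apply, h, mul_apply,
      Finset.sum_eq_single r (fun k _ hk ↦ by rw [hzero r k hk, zero_mul]) (by simp)]
  simp only [mul_apply, of_apply, div_mul_eq_mul_div, ← Finset.sum_div, ← hrow]
  rw [mul_div_cancel_left₀ _ (hpos r).ne']

theorem separable_nmf_identifiability_general {K R m : ℕ}
    (C₁ C₂ : Matrix (Fin K) (Fin R) ℝ) (H₁ H₂ : Matrix (Fin R) (Fin m) ℝ)
    (hC₁nn : ∀ i j, 0 ≤ C₁ i j) (hC₁sep : Separable C₁)
    (hC₂nn : ∀ i j, 0 ≤ C₂ i j) (hC₂sep : Separable C₂)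
    (hH₂rank : H₂.rank = R)
    (hfac : C₁ * H₁ = C₂ * H₂) :
    ∃ (σ : Equiv.Perm (Fin R)) (d : Fin R → ℝ),
      (∀ r, 0 < d r) ∧
      C₂ = C₁ * (σ.toPEquiv.toMatrix : Matrix (Fin R) (Fin R) ℝ) * Matrix.diagonal d ∧
      H₂ = (Matrix.diagonal d)⁻¹ * (σ.toPEquiv.toMatrix : Matrix (Fin R) (Fin R) ℝ).transpose * H₁ := by
  have hH₂card : H₂.rank = Fintype.card (Fin R) := by rw [hH₂rank, Fintype.card_fin]
  obtain ⟨A, hA, hH₂⟩ := hC₂sep.exists_nonneg_mul_eq hC₁nn hfac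
  obtain ⟨B, hB, hH₁⟩ := hC₁sep.exists_nonneg_mul_eq hC₂nn hfac.symm
  have hAB : A * B = 1 := by
    refine eq_of_mul_eq_mul_of_rank_eq_card hH₂card ?_
    rw [Matrix.mul_assoc, ← hH₁, ← hH₂, Matrix.one_mul]
  obtain ⟨σ, d, hd, rfl⟩ := exists_perm_diagonal_of_mul_eq_one hA hB hAB
  refine ⟨σ, d, hd, eq_of_mul_eq_mul_of_rank_eq_card hH₂card ?_, ?_⟩
  · rw [← hfac, hH₁]
    simp only [Matrix.mul_assoc]
  · rw [hH₂, ← inv_eq_left_inv hAB, inv_permMatrix_mul_diagonal σ fun r ↦ (hd r).ne']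

/-- Identifiability of separable NMF: if `G = C₁H₁ = C₂H₂` with both `Cᵢ` nonnegative and
separable and both `Hᵢ` nonnegative of rank `R`, then the two factorizations coincide up to a
common permutation and positive diagonal scaling. -/
theorem separable_nmf_identifiability {K R m : ℕ}
    (C₁ C₂ : Matrix (Fin K) (Fin R) ℝ) (H₁ H₂ : Matrix (Fin R) (Fin m) ℝ)
    (hC₁nn : ∀ i j, 0 ≤ C₁ i j) (hC₁sep : Separable C₁)
    (hH₁nn : ∀ i j, 0 ≤ H₁ i j) (hH₁rank : H₁.rank = R)
    (hC₂nn : ∀ i j, 0 ≤ C₂ i j) (hC₂sep : Separable C₂)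
    (hH₂nn : ∀ i j, 0 ≤ H₂ i j) (hH₂rank : H₂.rank = R)
    (hfac : C₁ * H₁ = C₂ * H₂) :
    ∃ (σ : Equiv.Perm (Fin R)) (d : Fin R → ℝ),
      (∀ r, 0 < d r) ∧
      C₂ = C₁ * (σ.toPEquiv.toMatrix : Matrix (Fin R) (Fin R) ℝ) * Matrix.diagonal d ∧
      H₂ = (Matrix.diagonal d)⁻¹ * (σ.toPEquiv.toMatrix : Matrix (Fin R) (Fin R) ℝ).transpose * H₁ :=
  separable_nmf_identifiability_general C₁ C₂ H₁ H₂ hC₁nn hC₁sep hC₂nn hC₂sep hH₂rank hfac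
end

section
/- Let A ∈ ℝ^{M×R} have linearly independent columns a₁,…,a_R and let b ∈ ℝ^R satisfy b ≥ 0 entrywise and Σ_{r=1}^R b_r = 1. Then ‖Ab‖₂ ≤ max_{r=1,…,R} ‖a_r‖₂. Moreover, if ‖Ab‖₂ = max_{r=1,…,R} ‖a_r‖₂, then b = e_r for some index r with ‖a_r‖₂ = max_{r'} ‖a_{r'}‖₂, where e_r denotes the r-th standard unit vector of ℝ^R. -/
/-! The column norms bound `‖Ab‖` because the closed ball is convex. For equality, use the
weighted variance identity `∑ bᵣ ‖aᵣ - Ab‖² = ∑ bᵣ ‖aᵣ‖² - ‖Ab‖²`: its right side is then `≤ 0`,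
so every column with `bᵣ > 0` equals `Ab`, and as the columns are distinct only one entry of `b`
is nonzero. -/

/-- The Euclidean norm of a vector in `ℝ^n`. -/
noncomputable def euclNorm {n : ℕ} (x : Fin n → ℝ) : ℝ := Real.sqrt (∑ i, x i ^ 2)

open Finset

section ConvexCombination

variable {ι E : Type*} [Fintype ι] {w : ι → ℝ}

theorem eq_single_of_forall_pos_imp_eq [DecidableEq ι] (hw0 : ∀ j, 0 ≤ w j)
    (hw1 : ∑ j, w j = 1) {i : ι} (hi : ∀ j, 0 < w j → j = i) : w = Pi.single i 1 := by
  have hzero : ∀ j, j ≠ i → w j = 0 := fun j hj =>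
    (hw0 j).eq_of_not_lt' fun hpos => hj (hi j hpos)
  have hwi : w i = 1 := by
    rw [← hw1, sum_eq_single i (fun j _ hj => hzero j hj) (by simp)]
  ext j
  rcases eq_or_ne j i with rfl | hj
  · simp [hwi]
  · simp [hzero j hj, Pi.single_eq_of_ne hj]

theorem exists_pos_of_sum_eq_one (hw1 : ∑ j, w j = 1) : ∃ i, 0 < w i := by
  have hlt : ∑ j : ι, (0 : ℝ) < ∑ j, w j := by simp [hw1]
  simpa using exists_lt_of_sum_lt hlt

theorem norm_sum_smul_le [SeminormedAddCommGroup E] [NormedSpace ℝ E] {v : ι → E}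
    (hw0 : ∀ j, 0 ≤ w j) (hw1 : ∑ j, w j = 1) {m : ℝ} (hv : ∀ j, ‖v j‖ ≤ m) :
    ‖∑ j, w j • v j‖ ≤ m := by
  simpa using (convex_closedBall (0 : E) m).sum_mem (fun j _ => hw0 j) hw1
    (fun j _ => by simpa using hv j)

variable [NormedAddCommGroup E] [InnerProductSpace ℝ E]

theorem sum_mul_norm_sub_sum_smul_sq (hw1 : ∑ j, w j = 1) (v : ι → E) :
    ∑ i, w i * ‖v i - ∑ j, w j • v j‖ ^ 2 = ∑ i, w i * ‖v i‖ ^ 2 - ‖∑ j, w j • v j‖ ^ 2 := by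
  set x := ∑ j, w j • v j
  have hx : ∑ i, w i * inner ℝ (v i) x = ‖x‖ ^ 2 := by
    simp_rw [← real_inner_smul_left, ← sum_inner]
    exact real_inner_self_eq_norm_sq x
  simp_rw [norm_sub_sq_real, mul_add, mul_sub, sum_add_distrib, sum_sub_distrib, ← sum_mul, hw1,
    mul_left_comm _ (2 : ℝ), ← mul_sum, hx]
  ring

theorem eq_sum_smul_of_norm_sum_smul_eq {v : ι → E} (hw0 : ∀ j, 0 ≤ w j) (hw1 : ∑ j, w j = 1)
    {m : ℝ} (hv : ∀ j, ‖v j‖ ≤ m) (heq : ‖∑ j, w j • v j‖ = m) {i : ι} (hi : 0 < w i) :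
    v i = ∑ j, w j • v j := by
  have hvar : ∑ j, w j * ‖v j - ∑ k, w k • v k‖ ^ 2 ≤ 0 := by
    rw [sum_mul_norm_sub_sum_smul_sq hw1, heq, sub_nonpos]
    calc ∑ j, w j * ‖v j‖ ^ 2 ≤ ∑ j, w j * m ^ 2 := by
          gcongr with j
          exacts [hw0 j, hv j]
      _ = m ^ 2 := by rw [← sum_mul, hw1, one_mul]
  have hnonneg : ∀ j ∈ univ, 0 ≤ w j * ‖v j - ∑ k, w k • v k‖ ^ 2 :=
    fun j _ => mul_nonneg (hw0 j) (sq_nonneg _)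
  have hterm := (sum_eq_zero_iff_of_nonneg hnonneg).1
    (hvar.antisymm (sum_nonneg hnonneg)) i (mem_univ i)
  simpa [hi.ne', sub_eq_zero] using hterm

theorem exists_eq_single_of_norm_sum_smul_eq [DecidableEq ι] {v : ι → E}
    (hinj : Function.Injective v) (hw0 : ∀ j, 0 ≤ w j) (hw1 : ∑ j, w j = 1) {m : ℝ}
    (hv : ∀ j, ‖v j‖ ≤ m) (heq : ‖∑ j, w j • v j‖ = m) : ∃ i, w = Pi.single i 1 ∧ ‖v i‖ = m := by
  have hsupp := fun i => eq_sum_smul_of_norm_sum_smul_eq (i := i) hw0 hw1 hv heq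
  obtain ⟨i, hi⟩ := exists_pos_of_sum_eq_one hw1
  refine ⟨i, eq_single_of_forall_pos_imp_eq hw0 hw1 fun j hj => hinj ?_, ?_⟩
  · rw [hsupp j hj, hsupp i hi]
  · rw [hsupp i hi, heq]

end ConvexCombination

theorem euclNorm_eq_norm_toLp {n : ℕ} (x : Fin n → ℝ) : euclNorm x = ‖WithLp.toLp 2 x‖ := by
  simp [euclNorm, EuclideanSpace.norm_eq, sq_abs]

theorem toLp_mulVec_eq_sum_smul_col {m n : ℕ} (A : Matrix (Fin m) (Fin n) ℝ) (b : Fin n → ℝ) :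
    WithLp.toLp 2 (A.mulVec b) = ∑ r, b r • WithLp.toLp 2 (fun i => A i r) := by
  ext i
  simp [Matrix.mulVec, dotProduct, mul_comm]

/-- SPA correctness step: if `A` has linearly independent columns and `b ≥ 0` sums to one,
then `‖Ab‖₂ ≤ max_r ‖a_r‖₂`; equality forces `b = e_r` for some index `r` attaining the
maximal column norm. -/
theorem spa_first_step {M R : ℕ} (A : Matrix (Fin M) (Fin R) ℝ)
    (hA : LinearIndependent ℝ (fun r : Fin R => fun i : Fin M => A i r))
    (b : Fin R → ℝ) (hb : ∀ r, 0 ≤ b r) (hsum : ∑ r, b r = 1) :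
    euclNorm (A.mulVec b) ≤ (⨆ r : Fin R, euclNorm (fun i => A i r)) ∧
    (euclNorm (A.mulVec b) = (⨆ r : Fin R, euclNorm (fun i => A i r)) →
      ∃ r : Fin R, b = Pi.single r 1 ∧
        euclNorm (fun i => A i r) = (⨆ r' : Fin R, euclNorm (fun i => A i r'))) := by
  set m := ⨆ r, euclNorm (fun i => A i r)
  set col : Fin R → EuclideanSpace ℝ (Fin M) := fun r => WithLp.toLp 2 (fun i => A i r)
  have hcol : ∀ r, ‖col r‖ ≤ m := fun r =>
    euclNorm_eq_norm_toLp (fun i => A i r) ▸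
      le_ciSup (Finite.bddAbove_range fun r' => euclNorm fun i => A i r') r
  have hinj : Function.Injective col := (WithLp.toLp_injective 2).comp hA.injective
  simp only [euclNorm_eq_norm_toLp, toLp_mulVec_eq_sum_smul_col]
  exact ⟨norm_sum_smul_le hb hsum hcol, exists_eq_single_of_norm_sum_smul_eq hinj hb hsum hcol⟩
end

section
/- (Serfling's Hoeffding inequality for sampling without replacement.) Let x₁, x₂, …, x_n be real numbers with mean μ = (1/n)Σ_{i=1}^n x_i, a = min_i x_i and b = max_i x_i, with a < b. Let X₁, …, X_w be w of these values sampled uniformly at random without replacement (equivalently, let the sample be a uniformly random size-w subset of the multiset {x₁,…,x_n}). Then for every t > 0: P( |(1/w) Σ_{i=1}^w X_i − μ| ≥ t ) ≤ 2 exp( − 2 w t² / ((1 − (w−1)/n)(b−a)²) ). -/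
/-!
Write `n = #A = m + w` for the population `A` with mean `μ`. A uniform `(w+1)`-subset of `A` is
obtained by drawing one element `i` uniformly and then a uniform `w`-subset of `A \ {i}`.
Recentering the remaining sum at the mean of `A \ {i}` leaves `i` with the contribution
`m / (m + w) * (x i - μ)`, so Hoeffding's lemma for a single uniform draw and induction on `w`
bound the moment generating function of the centred sample sum by
`exp (λ² (b - a)² / 8 * ∑_{j < w} (m / (m + j))²)`. Since this sum is at most
`w (m + 1) / n = w (1 - (w - 1) / n)`, a Chernoff bound with the optimal `λ` gives the claim.
-/

open Real Finset MeasureTheory ProbabilityTheory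
open scoped BigOperators

theorem sum_range_div_add_sq_le (m w : ℕ) :
    ∑ j ∈ range w, ((m : ℝ) / (m + j)) ^ 2 ≤ w * (m + 1) / (m + w) := by
  rcases m.eq_zero_or_pos with rfl | hm
  · simp only [CharP.cast_eq_zero, zero_div, zero_pow two_ne_zero, sum_const_zero]
    positivity
  induction w with
  | zero => simp
  | succ w ih =>
    have hpos : (0 : ℝ) < m + w := by positivity
    rw [sum_range_succ]
    refine (add_le_add_left ih _).trans ?_
    push_cast
    rw [div_pow, div_add_div _ _ hpos.ne' (by positivity),
      div_le_div_iff₀ (by positivity) (by positivity)]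
    nlinarith [mul_nonneg (Nat.cast_nonneg (α := ℝ) m) (Nat.cast_nonneg (α := ℝ) w)]

namespace Finset

variable {ι : Type*}

theorem sum_exp_mul_sub_expect_le {A : Finset ι} {x : ι → ℝ} {a b : ℝ}
    (hx : ∀ i ∈ A, x i ∈ Set.Icc a b) (s : ℝ) :
    ∑ i ∈ A, exp (s * (x i - 𝔼 j ∈ A, x j)) ≤ #A * exp (s ^ 2 * (b - a) ^ 2 / 8) := by
  rcases A.eq_empty_or_nonempty with rfl | hA
  · simp
  let _ : MeasurableSpace A := ⊤
  let μ : Measure A := (#A : ENNReal)⁻¹ • Measure.count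
  have : IsProbabilityMeasure μ := ⟨by simp [μ, ENNReal.inv_mul_cancel, hA.ne_empty]⟩
  have hint (g : ι → ℝ) : ∫ i, g i ∂μ = 𝔼 j ∈ A, g j := by
    simp [μ, integral_smul_measure, sum_attach A g, expect_eq_sum_div_card, div_eq_inv_mul]
  have hoeffding := (hasSubgaussianMGF_of_mem_Icc (μ := μ) (X := fun i : A => x i)
    (measurable_of_countable _).aemeasurable (ae_of_all _ fun i => hx i i.2)).mgf_le s
  rw [mgf, hint x, hint fun i => exp (s * (x i - 𝔼 j ∈ A, x j)), expect_eq_sum_div_card,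
    div_le_iff₀ (by simpa using hA.card_pos)] at hoeffding
  refine hoeffding.trans_eq ?_
  rw [mul_comm]
  push_cast
  rw [Real.norm_eq_abs, div_pow, sq_abs]
  ring_nf

theorem card_filter_le_abs_le_mul_sum_exp (S : Finset ι) (f : ι → ℝ) {u lam : ℝ}
    (hlam : 0 ≤ lam) :
    (#{s ∈ S | u ≤ |f s|} : ℝ) ≤
      exp (-(lam * u)) * ∑ s ∈ S, (exp (lam * f s) + exp (-lam * f s)) := by
  rw [card_filter, mul_sum]
  push_cast
  refine sum_le_sum fun s _ => ?_
  split_ifs with hs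
  · calc (1 : ℝ) ≤ exp (-(lam * u)) * exp (lam * |f s|) := by
          rw [← exp_add, one_le_exp_iff]; nlinarith
      _ ≤ _ := by
          gcongr
          rcases abs_choice (f s) with h | h <;> rw [h]
          · exact le_add_of_nonneg_right (exp_nonneg _)
          · rw [mul_neg, ← neg_mul]
            exact le_add_of_nonneg_left (exp_nonneg _)
  · positivity

variable [DecidableEq ι]

theorem sum_powersetCard_erase_insert {M : Type*} [AddCommMonoid M]
    (A : Finset ι) (w : ℕ) (g : Finset ι → M) :
    ∑ i ∈ A, ∑ T ∈ (A.erase i).powersetCard w, g (insert i T) =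
      (w + 1) • ∑ T ∈ A.powersetCard (w + 1), g T := by
  have hfiber (i : ι) (hi : i ∈ A) : ∑ T ∈ (A.erase i).powersetCard w, g (insert i T) =
      ∑ T ∈ A.powersetCard (w + 1) with i ∈ T, g T := by
    refine sum_nbij' (insert i) (erase · i) (fun T hT => ?_) (fun T hT => ?_) (fun T hT => ?_)
      (fun T hT => insert_erase (mem_filter.1 hT).2) fun _ _ => rfl
    all_goals simp only [mem_filter, mem_powersetCard, subset_erase] at hT ⊢; grind
  calc _ = ∑ i ∈ A, ∑ T ∈ A.powersetCard (w + 1) with i ∈ T, g T := sum_congr rfl hfiber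
    _ = ∑ T ∈ A.powersetCard (w + 1), ∑ _i ∈ T, g T := by
      refine sum_comm' fun i T => ?_
      simp only [mem_filter, mem_powersetCard]
      exact ⟨fun ⟨_, hT, hi⟩ => ⟨hi, hT⟩, fun ⟨hi, hT⟩ => ⟨hT.1 hi, hT, hi⟩⟩
    _ = _ := by
      rw [smul_sum]
      exact sum_congr rfl fun T hT => by rw [sum_const, (mem_powersetCard.1 hT).2]

theorem sum_insert_sub_mul_expect {A T : Finset ι} {i : ι} {m w : ℕ} (hi : i ∈ A)
    (hA : #A = m + w + 1) (hT : T ⊆ A.erase i) (x : ι → ℝ) :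
    ∑ j ∈ insert i T, x j - (w + 1) * 𝔼 j ∈ A, x j =
      m / (m + w) * (x i - 𝔼 j ∈ A, x j) + (∑ j ∈ T, x j - w * 𝔼 j ∈ A.erase i, x j) := by
  have herase : #(A.erase i) = m + w := by rw [card_erase_of_mem hi, hA]; rfl
  rw [sum_insert fun h => by simpa using hT h, expect_eq_sum_div_card, expect_eq_sum_div_card,
    herase, hA, sum_erase_eq_sub hi]
  rcases (m + w).eq_zero_or_pos with h | h
  -- here `A = {i}`, and `m / (m + w) = 0 / 0 = 0`
  · have hAi : A.erase i = ∅ := card_eq_zero.1 (herase.trans h)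
    have hsum : ∑ j ∈ A, x j - x i = 0 := by rw [← sum_erase_eq_sub hi, hAi, sum_empty]
    obtain ⟨rfl, rfl⟩ : m = 0 ∧ w = 0 := by omega
    rw [show T = ∅ by simpa [hAi] using hT]
    norm_num
    linarith
  · have : (m + w : ℝ) ≠ 0 := by exact_mod_cast h.ne'
    push_cast
    field_simp
    ring

theorem succ_mul_sum_powersetCard_exp_eq (lam : ℝ) {m w : ℕ} {A : Finset ι}
    (hA : #A = m + w + 1) (x : ι → ℝ) :
    (w + 1) * ∑ T ∈ A.powersetCard (w + 1),
        exp (lam * (∑ i ∈ T, x i - (w + 1 : ℕ) * 𝔼 i ∈ A, x i)) =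
      ∑ i ∈ A, exp (m / (m + w) * lam * (x i - 𝔼 j ∈ A, x j)) *
        ∑ T ∈ (A.erase i).powersetCard w,
          exp (lam * (∑ j ∈ T, x j - w * 𝔼 j ∈ A.erase i, x j)) := by
  rw [← Nat.cast_add_one, ← nsmul_eq_mul, ← sum_powersetCard_erase_insert]
  refine sum_congr rfl fun i hi => ?_
  rw [mul_sum]
  refine sum_congr rfl fun T hT => ?_
  rw [← exp_add, Nat.cast_succ, sum_insert_sub_mul_expect hi hA (mem_powersetCard.1 hT).1]
  ring_nf

theorem sum_powersetCard_exp_mul_sum_sub_le {x : ι → ℝ} {a b : ℝ} (lam : ℝ) {m w : ℕ}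
    {A : Finset ι} (hA : #A = m + w) (hx : ∀ i ∈ A, x i ∈ Set.Icc a b) :
    ∑ T ∈ A.powersetCard w, exp (lam * (∑ i ∈ T, x i - w * 𝔼 i ∈ A, x i)) ≤
      (m + w).choose w *
        exp (lam ^ 2 * (b - a) ^ 2 / 8 * ∑ j ∈ range w, ((m : ℝ) / (m + j)) ^ 2) := by
  induction w generalizing A with
  | zero => simp
  | succ w ih =>
    set s := m / (m + w : ℝ) * lam
    set E := lam ^ 2 * (b - a) ^ 2 / 8 * ∑ j ∈ range w, ((m : ℝ) / (m + j)) ^ 2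
    have hchoose : (#A : ℝ) * (m + w).choose w = (w + 1) * (m + (w + 1)).choose (w + 1) := by
      rw [hA]
      exact_mod_cast (Nat.add_one_mul_choose_eq (m + w) w).trans (mul_comm _ _)
    refine le_of_mul_le_mul_left ?_ (by positivity : (0 : ℝ) < w + 1)
    calc _ = ∑ i ∈ A, exp (s * (x i - 𝔼 j ∈ A, x j)) * ∑ T ∈ (A.erase i).powersetCard w,
            exp (lam * (∑ j ∈ T, x j - w * 𝔼 j ∈ A.erase i, x j)) :=
          succ_mul_sum_powersetCard_exp_eq lam hA x
      _ ≤ (∑ i ∈ A, exp (s * (x i - 𝔼 j ∈ A, x j))) * ((m + w).choose w * exp E) := by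
          rw [sum_mul]
          refine sum_le_sum fun i hi => mul_le_mul_of_nonneg_left ?_ (exp_pos _).le
          have herase : #(A.erase i) = m + w := by rw [card_erase_of_mem hi, hA]; rfl
          exact ih herase fun j hj => hx j (mem_of_mem_erase hj)
      _ ≤ #A * exp (s ^ 2 * (b - a) ^ 2 / 8) * ((m + w).choose w * exp E) := by
          gcongr
          exact sum_exp_mul_sub_expect_le hx s
      _ = _ := by
          have hs : s ^ 2 * (b - a) ^ 2 / 8 =
              lam ^ 2 * (b - a) ^ 2 / 8 * (m / (m + w : ℝ)) ^ 2 := by ring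
          rw [sum_range_succ, mul_add, exp_add, hs]
          linear_combination exp E * exp (lam ^ 2 * (b - a) ^ 2 / 8 * (m / (m + w : ℝ)) ^ 2) *
            hchoose

theorem card_filter_powersetCard_le_abs_sum_sub {x : ι → ℝ} {a b u : ℝ} {m w : ℕ}
    {A : Finset ι} (hA : #A = m + w) (hx : ∀ i ∈ A, x i ∈ Set.Icc a b) (hu : 0 ≤ u) :
    (#{T ∈ A.powersetCard w | u ≤ |∑ i ∈ T, x i - w * 𝔼 i ∈ A, x i|} : ℝ) ≤
      2 * (m + w).choose w * exp (-(2 * u ^ 2) / (w * (m + 1) * (b - a) ^ 2 / (m + w))) := by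
  set σ : ℝ := w * (m + 1) * (b - a) ^ 2 / (m + w)
  have hmgf (l : ℝ) : ∑ T ∈ A.powersetCard w, exp (l * (∑ i ∈ T, x i - w * 𝔼 i ∈ A, x i)) ≤
      (m + w).choose w * exp (l ^ 2 * σ / 8) := by
    refine (sum_powersetCard_exp_mul_sum_sub_le l hA hx).trans ?_
    gcongr
    calc _ ≤ l ^ 2 * (b - a) ^ 2 / 8 * (w * (m + 1) / (m + w)) := by
          gcongr
          exact sum_range_div_add_sq_le m w
      _ = l ^ 2 * σ / 8 := by ring
  -- the minimiser of `λ ↦ λ² σ / 8 - λ u`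
  set lam := 4 * u / σ
  calc _ ≤ exp (-(lam * u)) * ∑ T ∈ A.powersetCard w,
          (exp (lam * (∑ i ∈ T, x i - w * 𝔼 i ∈ A, x i)) +
            exp (-lam * (∑ i ∈ T, x i - w * 𝔼 i ∈ A, x i))) :=
        card_filter_le_abs_le_mul_sum_exp _ _ (by positivity)
    _ ≤ exp (-(lam * u)) * ((m + w).choose w * exp (lam ^ 2 * σ / 8) +
          (m + w).choose w * exp ((-lam) ^ 2 * σ / 8)) := by
        rw [sum_add_distrib]
        gcongr <;> exact hmgf _
    _ = 2 * (m + w).choose w * exp (lam ^ 2 * σ / 8 - lam * u) := by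
        rw [neg_sq, sub_eq_add_neg, exp_add]
        ring
    _ = _ := by
        rcases eq_or_ne σ 0 with h | h
        · simp [lam, h]
        · congr 2
          simp only [lam]
          field_simp
          ring

theorem card_filter_powersetCard_le_abs_sum_div_sub_expect {x : ι → ℝ} {a b t : ℝ} {w : ℕ}
    {A : Finset ι} (hw : 0 < w) (hwA : w ≤ #A) (hx : ∀ i ∈ A, x i ∈ Set.Icc a b) (ht : 0 ≤ t) :
    (#{T ∈ A.powersetCard w | t ≤ |(∑ i ∈ T, x i) / w - 𝔼 i ∈ A, x i|} : ℝ) ≤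
      2 * (#A).choose w * exp (-(2 * w * t ^ 2) / ((1 - (w - 1) / #A) * (b - a) ^ 2)) := by
  obtain ⟨m, hA⟩ : ∃ m, #A = m + w := ⟨#A - w, by omega⟩
  have hw' : (0 : ℝ) < w := by exact_mod_cast hw
  have hfilter : {T ∈ A.powersetCard w | t ≤ |(∑ i ∈ T, x i) / w - 𝔼 i ∈ A, x i|} =
      {T ∈ A.powersetCard w | w * t ≤ |∑ i ∈ T, x i - w * 𝔼 i ∈ A, x i|} := by
    refine filter_congr fun T _ => ?_
    rw [div_sub' hw'.ne', abs_div, abs_of_pos hw', le_div_iff₀ hw', mul_comm]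
  rw [hfilter]
  refine (card_filter_powersetCard_le_abs_sum_sub hA hx (by positivity)).trans_eq ?_
  have hmw : (m + w : ℝ) ≠ 0 := by positivity
  have hfrac : 1 - ((w : ℝ) - 1) / #A = (m + 1) / (m + w) := by
    rw [hA]; push_cast; field_simp; ring
  rw [hfrac, hA, show -(2 * ((w : ℝ) * t) ^ 2) = w * -(2 * w * t ^ 2) by ring,
    show (w : ℝ) * (m + 1) * (b - a) ^ 2 / (m + w) = w * ((m + 1) / (m + w) * (b - a) ^ 2) by ring,
    mul_div_mul_left _ _ hw'.ne']

end Finset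

open Classical in
theorem serfling_hoeffding_general (n w : ℕ) (hw : 1 ≤ w) (hwn : w ≤ n)
    (x : Fin n → ℝ) (a b : ℝ)
    (ha : (∃ i, x i = a) ∧ ∀ i, a ≤ x i)
    (hb : (∃ i, x i = b) ∧ ∀ i, x i ≤ b)
    (t : ℝ) (ht : 0 < t) :
    ((((Finset.univ : Finset (Fin n)).powersetCard w).filter
        (fun s => t ≤ |(∑ i ∈ s, x i) / (w : ℝ) - (∑ i, x i) / (n : ℝ)|)).card : ℝ) /
      ((((Finset.univ : Finset (Fin n)).powersetCard w).card : ℝ)) ≤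
      2 * Real.exp (-(2 * (w : ℝ) * t ^ 2) /
        ((1 - ((w : ℝ) - 1) / (n : ℝ)) * (b - a) ^ 2)) := by
  have htail := card_filter_powersetCard_le_abs_sum_div_sub_expect (A := univ) hw
    (by simpa using hwn) (fun i _ => ⟨ha.2 i, hb.2 i⟩) ht.le
  simp only [expect_eq_sum_div_card, card_univ, Fintype.card_fin] at htail
  rw [card_powersetCard, card_univ, Fintype.card_fin,
    div_le_iff₀ (by exact_mod_cast Nat.choose_pos hwn)]
  exact htail.trans_eq (by ring)

open Classical in
/-- Serfling's Hoeffding inequality for sampling without replacement: the probability (over a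
uniformly random size-`w` subset of `{x₁,…,x_n}`) that the sample mean deviates from the
population mean `μ` by at least `t` is at most
`2 exp(−2wt²/((1−(w−1)/n)(b−a)²))`, where `a = min_i x_i` and `b = max_i x_i`. -/
theorem serfling_hoeffding (n w : ℕ) (hw : 1 ≤ w) (hwn : w ≤ n)
    (x : Fin n → ℝ) (a b : ℝ)
    (ha : (∃ i, x i = a) ∧ ∀ i, a ≤ x i)
    (hb : (∃ i, x i = b) ∧ ∀ i, x i ≤ b)
    (hab : a < b) (t : ℝ) (ht : 0 < t) :
    ((((Finset.univ : Finset (Fin n)).powersetCard w).filter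
        (fun s => t ≤ |(∑ i ∈ s, x i) / (w : ℝ) - (∑ i, x i) / (n : ℝ)|)).card : ℝ) /
      ((((Finset.univ : Finset (Fin n)).powersetCard w).card : ℝ)) ≤
      2 * Real.exp (-(2 * (w : ℝ) * t ^ 2) /
        ((1 - ((w : ℝ) - 1) / (n : ℝ)) * (b - a) ^ 2)) :=
  serfling_hoeffding_general n w hw hwn x a b ha hb t ht
end

section
/- Let I, J, K be positive integers and Y ∈ ℝ^{I×J×K}. Let ξ > 0 and let X̄₁, …, X̄_N ∈ ℝ^{I×J×K} be tensors such that for every n and every (i,j) ∈ [I]×[J], the quantity W_{ij}(X̄_n) = (1/K)‖Y(i,j,:) − X̄_n(i,j,:)‖₂² lies in [0, ξ]. Let Ω be a uniformly random subset of [I]×[J] of cardinality m (1 ≤ m ≤ IJ), and define L̂(X̄) = (1/(mK)) Σ_{(i,j)∈Ω} ‖Y(i,j,:) − X̄(i,j,:)‖₂² and L(X̄) = (1/(IJK)) Σ_{(i,j)∈[I]×[J]} ‖Y(i,j,:) − X̄(i,j,:)‖₂². Then for every δ ∈ (0,1), with probability at least 1 − δ: max_{n=1,…,N} |L̂(X̄_n)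 − L(X̄_n)| ≤ sqrt( (ξ² log(2N/δ)/2) · (1/m − 1/(IJ) + 1/(IJ·m)) ). -/
open Finset

open Real

/-- Core inequality behind Hoeffding's lemma. -/
lemma hoeffding_core {s : ℝ} (hs0 : 0 ≤ s) (hs1 : s ≤ 1) (u : ℝ) :
    (1 - s) + s * Real.exp u ≤ Real.exp (s * u + u ^ 2 / 8) := by
  set D : ℝ → ℝ := fun u => 1 - s + s * Real.exp u with hD
  have hDpos : ∀ u, 0 < D u := by
    intro u
    rcases lt_or_eq_of_le hs1 with h | h
    · have : 0 < 1 - s := by linarith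
      have : 0 ≤ s * Real.exp u := mul_nonneg hs0 (Real.exp_pos u).le
      simp only [hD]; linarith
    · simp only [hD, h]; have := Real.exp_pos u; linarith
  -- g u = s*u + u^2/8 - log (D u); show g ≥ 0
  set g : ℝ → ℝ := fun u => s * u + u ^ 2 / 8 - Real.log (D u) with hg
  set g1 : ℝ → ℝ := fun u => s + u / 4 - s * Real.exp u / D u with hg1
  set g2 : ℝ → ℝ := fun u => 1 / 4 - s * (1 - s) * Real.exp u / (D u) ^ 2 with hg2
  have hDderiv : ∀ u, HasDerivAt D (s * Real.exp u) u := by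
    intro u
    exact ((Real.hasDerivAt_exp u).const_mul s).const_add (1 - s)
  have hgderiv : ∀ u, HasDerivAt g (g1 u) u := by
    intro u
    have h1 : HasDerivAt (fun u : ℝ => s * u + u ^ 2 / 8) (s + u * 2 / 8) u := by
      have := ((hasDerivAt_id u).const_mul s).add
        (((hasDerivAt_pow 2 u)).div_const 8)
      simpa [mul_comm, Pi.add_def] using this
    have h2 : HasDerivAt (fun u => Real.log (D u)) (s * Real.exp u / D u) u :=
      (hDderiv u).log (hDpos u).ne'
    have := h1.sub h2
    exact this.congr_deriv (by simp only [hg1]; ring)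
  have hg1deriv : ∀ u, HasDerivAt g1 (g2 u) u := by
    intro u
    have h1 : HasDerivAt (fun u : ℝ => s + u / 4) (1 / 4) u := by
      simpa using ((hasDerivAt_id u).div_const 4).const_add s
    have h2 : HasDerivAt (fun u => s * Real.exp u / D u)
        ((s * Real.exp u * D u - s * Real.exp u * (s * Real.exp u)) / (D u) ^ 2) u :=
      ((Real.hasDerivAt_exp u).const_mul s).div (hDderiv u) (hDpos u).ne'
    have := h1.sub h2
    have hDne := (hDpos u).ne'
    exact this.congr_deriv (by simp only [hg2, hD]; field_simp; ring)
  have hg2nonneg : ∀ u, 0 ≤ g2 u := by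
    intro u
    have hDu : D u = 1 - s + s * Real.exp u := rfl
    have hDposu : (0:ℝ) < 1 - s + s * Real.exp u := hDu ▸ hDpos u
    show 0 ≤ 1 / 4 - s * (1 - s) * Real.exp u / (D u) ^ 2
    rw [hDu, sub_nonneg, div_le_iff₀ (by positivity)]
    nlinarith [sq_nonneg ((1 - s) - s * Real.exp u), Real.exp_pos u]
  have hg1mono : Monotone g1 :=
    monotone_of_hasDerivAt_nonneg hg1deriv hg2nonneg
  have hg1zero : g1 0 = 0 := by
    simp only [hg1, hD]
    simp
  have hgzero : g 0 = 0 := by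
    simp only [hg, hD]
    simp
  have hgnonneg : ∀ u, 0 ≤ g u := by
    intro u
    have hgc : Continuous g := by
      have : Differentiable ℝ g := fun x => (hgderiv x).differentiableAt
      exact this.continuous
    rcases le_total 0 u with h | h
    · have hmono : MonotoneOn g (Set.Ici 0) := by
        apply monotoneOn_of_hasDerivWithinAt_nonneg (convex_Ici 0) hgc.continuousOn
          (fun x _ => (hgderiv x).hasDerivWithinAt)
        intro x hx
        rw [interior_Ici] at hx
        have : g1 0 ≤ g1 x := hg1mono (le_of_lt hx)
        linarith [hg1zero ▸ this]
      have := hmono (Set.mem_Ici.2 le_rfl) (Set.mem_Ici.2 h) h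
      linarith [hgzero ▸ this]
    · have hanti : AntitoneOn g (Set.Iic 0) := by
        apply antitoneOn_of_hasDerivWithinAt_nonpos (convex_Iic 0) hgc.continuousOn
          (fun x _ => (hgderiv x).hasDerivWithinAt)
        intro x hx
        rw [interior_Iic] at hx
        have : g1 x ≤ g1 0 := hg1mono (le_of_lt hx)
        linarith [hg1zero ▸ this]
      have := hanti (Set.mem_Iic.2 h) (Set.mem_Iic.2 le_rfl) h
      linarith [hgzero ▸ this]
  have := hgnonneg u
  have hlog : Real.log (D u) ≤ s * u + u ^ 2 / 8 := by
    simp only [hg] at this; linarith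
  calc (1 - s) + s * Real.exp u = D u := rfl
    _ = Real.exp (Real.log (D u)) := (Real.exp_log (hDpos u)).symm
    _ ≤ Real.exp (s * u + u ^ 2 / 8) := Real.exp_le_exp.2 hlog



/-- Hoeffding's lemma, finite uniform version. -/
lemma hoeffding_finset {α : Type*} {u : Finset α} (hne : u.Nonempty) {h : α → ℝ} {p q : ℝ}
    (hlb : ∀ x ∈ u, p ≤ h x) (hub : ∀ x ∈ u, h x ≤ q)
    (h0 : ∑ x ∈ u, h x = 0) :
    ∑ x ∈ u, Real.exp (h x) ≤ u.card * Real.exp ((q - p) ^ 2 / 8) := by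
  have hcard : (0:ℝ) < u.card := by exact_mod_cast Finset.card_pos.2 hne
  have hp0 : p ≤ 0 := by
    have h1 : ∑ _x ∈ u, p ≤ ∑ x ∈ u, h x := Finset.sum_le_sum hlb
    rw [h0, Finset.sum_const, nsmul_eq_mul] at h1
    by_contra hc
    push_neg at hc
    nlinarith
  have hq0 : 0 ≤ q := by
    have h1 : ∑ x ∈ u, h x ≤ ∑ _x ∈ u, q := Finset.sum_le_sum hub
    rw [h0, Finset.sum_const, nsmul_eq_mul] at h1
    by_contra hc
    push_neg at hc
    nlinarith
  rcases eq_or_lt_of_le (hp0.trans hq0) with hpq | hpq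
  · -- p = q = 0, so h ≡ 0 on u
    have hq : q = 0 := le_antisymm (hpq ▸ hp0) hq0
    have hp : p = 0 := by rw [hpq, hq]
    have : ∀ x ∈ u, h x = 0 := fun x hx => le_antisymm (hq ▸ hub x hx) (hp ▸ hlb x hx)
    calc ∑ x ∈ u, Real.exp (h x) = ∑ x ∈ u, 1 := by
          apply Finset.sum_congr rfl; intro x hx; rw [this x hx, Real.exp_zero]
      _ = u.card := by rw [Finset.sum_const, nsmul_eq_mul, mul_one]
      _ ≤ u.card * Real.exp ((q - p) ^ 2 / 8) := by
          nlinarith [Real.one_le_exp (by positivity : (0:ℝ) ≤ (q - p) ^ 2 / 8)]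
  · -- p < q
    have hqp : 0 < q - p := sub_pos.2 hpq
    -- pointwise convexity bound
    have hpt : ∀ x ∈ u, Real.exp (h x) ≤
        ((q - h x) / (q - p)) * Real.exp p + ((h x - p) / (q - p)) * Real.exp q := by
      intro x hx
      have ha : 0 ≤ (q - h x) / (q - p) := div_nonneg (by linarith [hub x hx]) hqp.le
      have hb : 0 ≤ (h x - p) / (q - p) := div_nonneg (by linarith [hlb x hx]) hqp.le
      have hab : (q - h x) / (q - p) + (h x - p) / (q - p) = 1 := by
        field_simp
        ring
      have hconv := convexOn_exp.2 (Set.mem_univ p) (Set.mem_univ q) ha hb hab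
      have hx' : (q - h x) / (q - p) * p + (h x - p) / (q - p) * q = h x := by
        field_simp; ring
      simp only [smul_eq_mul] at hconv
      rw [hx'] at hconv
      exact hconv
    have hsum : ∑ x ∈ u, Real.exp (h x) ≤
        (u.card : ℝ) * ((q * Real.exp p - p * Real.exp q) / (q - p)) := by
      calc ∑ x ∈ u, Real.exp (h x)
          ≤ ∑ x ∈ u, (((q - h x) / (q - p)) * Real.exp p + ((h x - p) / (q - p)) * Real.exp q) :=
            Finset.sum_le_sum hpt
        _ = (u.card : ℝ) * ((q * Real.exp p - p * Real.exp q) / (q - p)) := by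
            rw [Finset.sum_add_distrib]
            rw [← Finset.sum_mul, ← Finset.sum_mul]
            rw [← Finset.sum_div, ← Finset.sum_div]
            rw [Finset.sum_sub_distrib, Finset.sum_sub_distrib, h0,
              Finset.sum_const, nsmul_eq_mul]
            simp only [Finset.sum_const, nsmul_eq_mul]
            field_simp
            ring
    -- scalar inequality
    have hkey : (q * Real.exp p - p * Real.exp q) / (q - p) ≤ Real.exp ((q - p) ^ 2 / 8) := by
      set s := -p / (q - p) with hs
      have hs0 : 0 ≤ s := div_nonneg (by linarith) hqp.le
      have hs1 : s ≤ 1 := by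
        rw [hs, div_le_one hqp]; linarith
      have hcore := hoeffding_core hs0 hs1 (q - p)
      have hmul := mul_le_mul_of_nonneg_right hcore (Real.exp_pos p).le
      rw [← Real.exp_add] at hmul
      have he1 : s * (q - p) + (q - p) ^ 2 / 8 + p = (q - p) ^ 2 / 8 := by
        rw [hs]; field_simp; ring
      rw [he1] at hmul
      have he2 : ((1 - s) + s * Real.exp (q - p)) * Real.exp p
          = (q * Real.exp p - p * Real.exp q) / (q - p) := by
        rw [hs, Real.exp_sub]
        have := (Real.exp_pos p).ne'
        field_simp
        ring
      rw [he2] at hmul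
      exact hmul
    calc ∑ x ∈ u, Real.exp (h x)
        ≤ (u.card : ℝ) * ((q * Real.exp p - p * Real.exp q) / (q - p)) := hsum
      _ ≤ u.card * Real.exp ((q - p) ^ 2 / 8) :=
          mul_le_mul_of_nonneg_left hkey hcard.le


open Finset

/-- Double counting: summing `g (u.erase x)` over size-`(k+1)` sets `u` and `x ∈ u`
equals `(n - k)` times the sum of `g` over size-`k` sets. -/
lemma sum_powersetCard_erase {α : Type*} [Fintype α] [DecidableEq α] (k : ℕ) (g : Finset α → ℝ) :
    ∑ u ∈ powersetCard (k + 1) (univ : Finset α), ∑ x ∈ u, g (u.erase x)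
      = ((Fintype.card α - k : ℕ) : ℝ) * ∑ t ∈ powersetCard k (univ : Finset α), g t := by
  have hRHS : ((Fintype.card α - k : ℕ) : ℝ) * ∑ t ∈ powersetCard k (univ : Finset α), g t
      = ∑ t ∈ powersetCard k (univ : Finset α), ∑ _x ∈ (univ \ t), g t := by
    rw [Finset.mul_sum]
    apply Finset.sum_congr rfl
    intro t ht
    rw [Finset.sum_const, nsmul_eq_mul]
    congr 2
    rw [Finset.card_sdiff_of_subset (Finset.subset_univ t), Finset.card_univ,
      (Finset.mem_powersetCard.1 ht).2]
  rw [hRHS, Finset.sum_sigma', Finset.sum_sigma']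
  apply Finset.sum_bij' (i := fun p _ => (⟨p.1.erase p.2, p.2⟩ :
      Σ _t : Finset α, α)) (j := fun p _ => (⟨insert p.2 p.1, p.2⟩ : Σ _t : Finset α, α))
  · -- hi
    intro a ha
    obtain ⟨hu, hx⟩ := Finset.mem_sigma.1 ha
    obtain ⟨_, hcard⟩ := Finset.mem_powersetCard.1 hu
    refine Finset.mem_sigma.2 ⟨Finset.mem_powersetCard.2 ⟨Finset.subset_univ _, ?_⟩, ?_⟩
    · rw [Finset.card_erase_of_mem hx, hcard]
      simp
    · exact Finset.mem_sdiff.2 ⟨Finset.mem_univ _, Finset.notMem_erase _ _⟩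
  · -- hj
    intro a ha
    obtain ⟨ht, hy⟩ := Finset.mem_sigma.1 ha
    obtain ⟨_, hcard⟩ := Finset.mem_powersetCard.1 ht
    have hyn : a.2 ∉ a.1 := (Finset.mem_sdiff.1 hy).2
    refine Finset.mem_sigma.2 ⟨Finset.mem_powersetCard.2 ⟨Finset.subset_univ _, ?_⟩, ?_⟩
    · rw [Finset.card_insert_of_notMem hyn, hcard]
    · exact Finset.mem_insert_self _ _
  · -- left_inv
    intro a ha
    obtain ⟨hu, hx⟩ := Finset.mem_sigma.1 ha
    simp [Finset.insert_erase hx]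
  · -- right_inv
    intro a ha
    obtain ⟨ht, hy⟩ := Finset.mem_sigma.1 ha
    have hyn : a.2 ∉ a.1 := (Finset.mem_sdiff.1 hy).2
    simp [Finset.erase_insert hyn]
  · -- values
    intro a ha
    rfl


lemma sum_inv_sq_le (q : ℕ) (hq : 1 ≤ q) : ∀ n : ℕ, q ≤ n →
    (q : ℝ) ^ 2 * ∑ k ∈ Finset.Ico q n, (1 : ℝ) / (k : ℝ) ^ 2
      ≤ ((n : ℝ) - q) * (q + 1) / n := by
  intro n hn
  induction n, hn using Nat.le_induction with
  | base =>
      simp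
  | succ n hn ih =>
      have hn1 : (1:ℝ) ≤ (n:ℝ) := by exact_mod_cast hq.trans hn
      have hqn : (q:ℝ) ≤ (n:ℝ) := by exact_mod_cast hn
      have hq1 : (1:ℝ) ≤ (q:ℝ) := by exact_mod_cast hq
      have hsum : ∑ k ∈ Finset.Ico q (n + 1), (1 : ℝ) / (k : ℝ) ^ 2
          = (∑ k ∈ Finset.Ico q n, (1 : ℝ) / (k : ℝ) ^ 2) + 1 / (n : ℝ) ^ 2 := by
        rw [Finset.sum_Ico_succ_top hn]
      rw [hsum]
      have ih' := ih
      have hstep : ((n : ℝ) - q) * (q + 1) / n + (q:ℝ)^2 * (1 / (n : ℝ) ^ 2)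
          ≤ (((n : ℝ) + 1) - q) * (q + 1) / ((n:ℝ) + 1) := by
        have hne : (n:ℝ) ≠ 0 := by linarith
        have hne1 : (n:ℝ) + 1 ≠ 0 := by linarith
        have h2 : ((n : ℝ) - q) * (q + 1) / n + (q:ℝ)^2 * (1 / (n : ℝ) ^ 2)
            = (((n:ℝ) - q) * (q + 1) * n + (q:ℝ)^2) / (n:ℝ)^2 := by
          field_simp
        rw [h2, div_le_div_iff₀ (by positivity) (by positivity)]
        nlinarith [mul_nonneg (by linarith : (0:ℝ) ≤ (q:ℝ)) (by linarith : (0:ℝ) ≤ (n:ℝ) - q)]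
      push_cast
      calc (q : ℝ) ^ 2 * ((∑ k ∈ Finset.Ico q n, (1 : ℝ) / (k : ℝ) ^ 2) + 1 / (n : ℝ) ^ 2)
          = (q : ℝ) ^ 2 * (∑ k ∈ Finset.Ico q n, (1 : ℝ) / (k : ℝ) ^ 2)
            + (q:ℝ)^2 * (1 / (n : ℝ) ^ 2) := by ring
        _ ≤ ((n : ℝ) - q) * (q + 1) / n + (q:ℝ)^2 * (1 / (n : ℝ) ^ 2) := by linarith
        _ ≤ (((n : ℝ) + 1) - q) * (q + 1) / ((n:ℝ) + 1) := hstep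


open Finset



lemma mgfAux {α : Type*} [Fintype α] [DecidableEq α] (v : α → ℝ) (a b θ : ℝ)
    (hab : a ≤ b)
    (hv : ∀ x, a ≤ v x ∧ v x ≤ b) (hv0 : ∑ x, v x = 0) :
    ∀ j k : ℕ, 1 ≤ k → k + j = Fintype.card α →
    ∑ t ∈ powersetCard k (univ : Finset α), Real.exp (θ * (∑ x ∈ t, v x) / k)
      ≤ ((Fintype.card α).choose k : ℝ) *
        Real.exp (θ ^ 2 * (b - a) ^ 2 / 8 * ∑ i ∈ Finset.Ico k (Fintype.card α), 1 / (i : ℝ) ^ 2) := by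
  intro j
  induction j with
  | zero =>
      intro k hk1 hkn
      simp only [Nat.add_zero] at hkn
      subst hkn
      rw [← Finset.card_univ, Finset.powersetCard_self]
      simp [hv0, Finset.Ico_self]
  | succ j ih =>
      intro k hk1 hkn
      set n := Fintype.card α with hn
      have hkltn : k < n := by omega
      have hk0 : (0:ℝ) < (k:ℝ) := by exact_mod_cast hk1
      have hk10 : (0:ℝ) < (k:ℝ) + 1 := by linarith
      -- inner bound for each u of card k+1
      have hinner : ∀ u ∈ powersetCard (k+1) (univ : Finset α),
          ∑ x ∈ u, Real.exp (θ * (∑ y ∈ u.erase x, v y) / k)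
            ≤ ((k:ℝ) + 1) * Real.exp (θ^2 * (b-a)^2 / (8 * (k:ℝ)^2))
              * Real.exp (θ * (∑ y ∈ u, v y) / ((k:ℝ)+1)) := by
        intro u hu
        obtain ⟨-, hcard⟩ := Finset.mem_powersetCard.1 hu
        have hne : u.Nonempty := by
          rw [← Finset.card_pos, hcard]; omega
        set S := ∑ y ∈ u, v y with hS
        set c0 : ℝ := θ * S * (1/(k:ℝ) - 1/((k:ℝ)+1)) with hc0
        set h : α → ℝ := fun x => c0 - (θ / k) * v x with hh
        have herase : ∀ x ∈ u, ∑ y ∈ u.erase x, v y = S - v x := by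
          intro x hx
          rw [Finset.sum_erase_eq_sub hx]
        have hdecomp : ∀ x ∈ u, θ * (∑ y ∈ u.erase x, v y) / k
            = θ * S / ((k:ℝ)+1) + h x := by
          intro x hx
          rw [herase x hx]
          simp only [hh, hc0]
          field_simp
          ring
        have hsum0 : ∑ x ∈ u, h x = 0 := by
          simp only [hh]
          rw [Finset.sum_sub_distrib, Finset.sum_const, ← Finset.mul_sum, ← hS, hcard,
            nsmul_eq_mul, hc0]
          push_cast
          field_simp
          ring
        -- bounds on h
        set e1 : ℝ := c0 - (θ/k) * a with he1
        set e2 : ℝ := c0 - (θ/k) * b with he2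
        have hlb : ∀ x ∈ u, min e1 e2 ≤ h x := by
          intro x hx
          obtain ⟨h1, h2⟩ := hv x
          rcases le_total 0 (θ/k) with hth | hth
          · exact (min_le_right e1 e2).trans (by simp only [hh, he2]; nlinarith)
          · exact (min_le_left e1 e2).trans (by simp only [hh, he1]; nlinarith)
        have hub : ∀ x ∈ u, h x ≤ max e1 e2 := by
          intro x hx
          obtain ⟨h1, h2⟩ := hv x
          rcases le_total 0 (θ/k) with hth | hth
          · exact le_trans (by simp only [hh, he1]; nlinarith) (le_max_left e1 e2)
          · exact le_trans (by simp only [hh, he2]; nlinarith) (le_max_right e1 e2)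
        have hwidth : (max e1 e2 - min e1 e2) ^ 2 / 8 = θ^2 * (b-a)^2 / (8 * (k:ℝ)^2) := by
          rw [max_sub_min_eq_abs, abs_sub_comm, sq_abs]
          have : e1 - e2 = (θ/k) * (b - a) := by simp only [he1, he2]; ring
          rw [this]
          field_simp
        have hhoef := hoeffding_finset hne hlb hub hsum0
        rw [hwidth, hcard] at hhoef
        calc ∑ x ∈ u, Real.exp (θ * (∑ y ∈ u.erase x, v y) / k)
            = ∑ x ∈ u, Real.exp (θ * S / ((k:ℝ)+1)) * Real.exp (h x) := by
              apply Finset.sum_congr rfl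
              intro x hx
              rw [← Real.exp_add, ← hdecomp x hx]
          _ = Real.exp (θ * S / ((k:ℝ)+1)) * ∑ x ∈ u, Real.exp (h x) :=
              (Finset.mul_sum _ _ _).symm
          _ ≤ Real.exp (θ * S / ((k:ℝ)+1)) *
              (((k:ℕ)+1 : ℕ) * Real.exp (θ^2 * (b-a)^2 / (8 * (k:ℝ)^2))) := by
              apply mul_le_mul_of_nonneg_left _ (Real.exp_pos _).le
              exact_mod_cast hhoef
          _ = ((k:ℝ) + 1) * Real.exp (θ^2 * (b-a)^2 / (8 * (k:ℝ)^2))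
              * Real.exp (θ * S / ((k:ℝ)+1)) := by
              push_cast
              ring
      -- combine
      have hdouble := sum_powersetCard_erase (α := α) k
        (fun t => Real.exp (θ * (∑ x ∈ t, v x) / k))
      have hnk : (0:ℝ) < ((n - k : ℕ) : ℝ) := by
        have : 0 < n - k := by omega
        exact_mod_cast this
      have hstep : ((n - k : ℕ) : ℝ) *
          ∑ t ∈ powersetCard k (univ : Finset α), Real.exp (θ * (∑ x ∈ t, v x) / k)
          ≤ ((k:ℝ) + 1) * Real.exp (θ^2 * (b-a)^2 / (8 * (k:ℝ)^2)) *
            ∑ u ∈ powersetCard (k+1) (univ : Finset α), Real.exp (θ * (∑ y ∈ u, v y) / ((k:ℝ)+1)) := by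
        rw [← hdouble, Finset.mul_sum]
        exact Finset.sum_le_sum (by
          intro u hu
          have := hinner u hu
          calc ∑ x ∈ u, Real.exp (θ * (∑ y ∈ u.erase x, v y) / k) ≤ _ := this
            _ = _ := by ring)
      have hih := ih (k+1) (by omega) (by omega)
      have hexp_pos : (0:ℝ) < ((k:ℝ) + 1) * Real.exp (θ^2 * (b-a)^2 / (8 * (k:ℝ)^2)) := by
        positivity
      have hchain : ((n - k : ℕ) : ℝ) *
          ∑ t ∈ powersetCard k (univ : Finset α), Real.exp (θ * (∑ x ∈ t, v x) / k)
          ≤ ((k:ℝ) + 1) * Real.exp (θ^2 * (b-a)^2 / (8 * (k:ℝ)^2)) *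
            ((n.choose (k+1) : ℝ) *
              Real.exp (θ ^ 2 * (b - a) ^ 2 / 8 * ∑ i ∈ Finset.Ico (k+1) n, 1 / (i : ℝ) ^ 2)) := by
        refine hstep.trans ?_
        apply mul_le_mul_of_nonneg_left _ hexp_pos.le
        exact_mod_cast hih
      -- identity: (k+1) * choose n (k+1) = (n-k) * choose n k
      have hchoose : ((k:ℝ) + 1) * (n.choose (k+1) : ℝ)
          = ((n - k : ℕ) : ℝ) * (n.choose k : ℝ) := by
        have := Nat.choose_succ_right_eq n k
        have h2 : (n.choose (k+1) * (k+1) : ℕ) = (n.choose k * (n - k) : ℕ) := this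
        have h3 : ((n.choose (k+1) * (k+1) : ℕ) : ℝ) = ((n.choose k * (n - k) : ℕ) : ℝ) := by
          exact_mod_cast h2
        push_cast at h3
        linarith
      -- Ico sum split
      have hsplit : ∑ i ∈ Finset.Ico k n, 1 / (i : ℝ) ^ 2
          = 1 / (k:ℝ)^2 + ∑ i ∈ Finset.Ico (k+1) n, 1 / (i : ℝ) ^ 2 := by
        rw [Finset.sum_eq_sum_Ico_succ_bot hkltn]
      -- finish
      have hfinal : ((k:ℝ) + 1) * Real.exp (θ^2 * (b-a)^2 / (8 * (k:ℝ)^2)) *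
            ((n.choose (k+1) : ℝ) *
              Real.exp (θ ^ 2 * (b - a) ^ 2 / 8 * ∑ i ∈ Finset.Ico (k+1) n, 1 / (i : ℝ) ^ 2))
          = ((n - k : ℕ) : ℝ) * ((n.choose k : ℝ) *
              Real.exp (θ ^ 2 * (b - a) ^ 2 / 8 * ∑ i ∈ Finset.Ico k n, 1 / (i : ℝ) ^ 2)) := by
        rw [hsplit, mul_add, Real.exp_add]
        have : θ ^ 2 * (b - a) ^ 2 / 8 * (1 / (k:ℝ)^2) = θ^2 * (b-a)^2 / (8 * (k:ℝ)^2) := by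
          field_simp
        rw [this]
        linear_combination (Real.exp (θ^2*(b-a)^2/(8*(k:ℝ)^2)) *
          Real.exp (θ ^ 2 * (b - a) ^ 2 / 8 * ∑ i ∈ Finset.Ico (k+1) n, 1 / (i : ℝ) ^ 2)) * hchoose
      rw [hfinal] at hchain
      exact le_of_mul_le_mul_left (by linarith [hchain]) hnk


open Finset



lemma mgf_bound {α : Type*} [Fintype α] [DecidableEq α] (v : α → ℝ) (a ξ lam : ℝ)
    (hξ : 0 ≤ ξ) (hv : ∀ x, a ≤ v x ∧ v x ≤ a + ξ) (hv0 : ∑ x, v x = 0)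
    (m : ℕ) (hm1 : 1 ≤ m) (hmn : m ≤ Fintype.card α) :
    ∑ s ∈ powersetCard m (univ : Finset α), Real.exp (lam * ∑ x ∈ s, v x)
      ≤ ((Fintype.card α).choose m : ℝ) *
        Real.exp (lam ^ 2 * ξ ^ 2 * m * ((Fintype.card α : ℝ) - m + 1) / (8 * Fintype.card α)) := by
  set n := Fintype.card α with hn
  have hn1 : 1 ≤ n := hm1.trans hmn
  have hmr : (m:ℝ) ≤ (n:ℝ) := by exact_mod_cast hmn
  have hnr : (0:ℝ) < (n:ℝ) := by exact_mod_cast hn1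
  have hexp0 : 0 ≤ lam ^ 2 * ξ ^ 2 * m * ((n : ℝ) - m + 1) / (8 * n) := by
    have h1 : (0:ℝ) ≤ (n:ℝ) - m + 1 := by linarith
    have h2 : (0:ℝ) ≤ lam ^ 2 * ξ ^ 2 * m := by positivity
    positivity
  rcases eq_or_lt_of_le hmn with heq | hlt
  · -- m = n
    subst heq
    simp only [hn] at hexp0 ⊢
    rw [← Finset.card_univ, Finset.powersetCard_self]
    rw [Finset.sum_singleton, hv0, mul_zero, Real.exp_zero, Nat.choose_self]
    rw [Finset.card_univ]
    have h1e := Real.one_le_exp hexp0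
    push_cast
    nlinarith [h1e]
  · -- m < n
    set q := n - m with hq
    have hq1 : 1 ≤ q := by omega
    have hqn : q ≤ n := by omega
    have hqm : q + m = n := by omega
    have hqr : (q:ℝ) = (n:ℝ) - m := by
      rw [hq]; push_cast [Nat.cast_sub hmn]; ring
    have hq0 : (0:ℝ) < (q:ℝ) := by exact_mod_cast hq1
    -- complement bijection
    have hbij : ∑ s ∈ powersetCard m (univ : Finset α), Real.exp (lam * ∑ x ∈ s, v x)
        = ∑ t ∈ powersetCard q (univ : Finset α), Real.exp (-lam * q * (∑ x ∈ t, v x) / q) := by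
      refine Finset.sum_bij' (fun s _ => sᶜ) (fun t _ => tᶜ) ?hi ?hj ?left ?right ?val
      case hi =>
        intro s hs
        obtain ⟨-, hcard⟩ := Finset.mem_powersetCard.1 hs
        exact Finset.mem_powersetCard.2 ⟨Finset.subset_univ _, by rw [Finset.card_compl, hcard]⟩
      case hj =>
        intro t ht
        obtain ⟨-, hcard⟩ := Finset.mem_powersetCard.1 ht
        refine Finset.mem_powersetCard.2 ⟨Finset.subset_univ _, ?_⟩
        rw [Finset.card_compl, hcard]
        omega
      case left => intro s _; exact compl_compl s
      case right => intro t _; exact compl_compl t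
      case val =>
        intro s hs
        have hsum : ∑ x ∈ s, v x + ∑ x ∈ sᶜ, v x = 0 := by
          rw [Finset.sum_add_sum_compl]; exact hv0
        have hcneg : ∑ x ∈ sᶜ, v x = - ∑ x ∈ s, v x := by linarith
        rw [hcneg]
        congr 1
        field_simp
    rw [hbij]
    have haux := mgfAux v a (a + ξ) (-lam * q) (by linarith) hv hv0 m q hq1 hqm
    refine haux.trans ?_
    rw [Nat.choose_symm hmn]
    apply mul_le_mul_of_nonneg_left _ (by positivity)
    apply Real.exp_le_exp.2
    have hsum := sum_inv_sq_le q hq1 n hqn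
    have hrw : (-lam * q) ^ 2 * (a + ξ - a) ^ 2 / 8 *
        ∑ i ∈ Finset.Ico q n, 1 / (i : ℝ) ^ 2
        = lam ^ 2 * ξ ^ 2 / 8 * ((q:ℝ)^2 * ∑ i ∈ Finset.Ico q n, 1 / (i : ℝ) ^ 2) := by
      ring
    rw [hrw]
    have h2 : lam ^ 2 * ξ ^ 2 / 8 * ((q:ℝ)^2 * ∑ i ∈ Finset.Ico q n, 1 / (i : ℝ) ^ 2)
        ≤ lam ^ 2 * ξ ^ 2 / 8 * (((n : ℝ) - q) * (q + 1) / n) :=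
      mul_le_mul_of_nonneg_left hsum (by positivity)
    refine h2.trans (le_of_eq ?_)
    rw [hqr]
    field_simp
    ring


open Finset


open Classical in
lemma tail_count {α : Type*} [Fintype α] [DecidableEq α] (v : α → ℝ) (a ξ lam : ℝ)
    (hξ : 0 ≤ ξ) (hv : ∀ x, a ≤ v x ∧ v x ≤ a + ξ) (hv0 : ∑ x, v x = 0)
    (m : ℕ) (hm1 : 1 ≤ m) (hmn : m ≤ Fintype.card α) (r : ℝ) (hlam : 0 ≤ lam) :
    (((powersetCard m (univ : Finset α)).filter (fun s => r < ∑ x ∈ s, v x)).card : ℝ)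
      ≤ ((Fintype.card α).choose m : ℝ) *
        Real.exp (lam ^ 2 * ξ ^ 2 * m * ((Fintype.card α : ℝ) - m + 1) / (8 * Fintype.card α)
          - lam * r) := by
  set P := powersetCard m (univ : Finset α) with hP
  set F := P.filter (fun s => r < ∑ x ∈ s, v x) with hF
  have h1 : (F.card : ℝ) ≤ ∑ s ∈ F, Real.exp (lam * ∑ x ∈ s, v x - lam * r) := by
    have hcard : (F.card : ℝ) = ∑ _s ∈ F, (1:ℝ) := by simp
    rw [hcard]
    apply Finset.sum_le_sum
    intro s hs
    have hr : r < ∑ x ∈ s, v x := (Finset.mem_filter.1 hs).2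
    have : 0 ≤ lam * ∑ x ∈ s, v x - lam * r := by nlinarith
    linarith [Real.one_le_exp this]
  have h2 : ∑ s ∈ F, Real.exp (lam * ∑ x ∈ s, v x - lam * r)
      ≤ ∑ s ∈ P, Real.exp (lam * ∑ x ∈ s, v x - lam * r) :=
    Finset.sum_le_sum_of_subset_of_nonneg (Finset.filter_subset _ _)
      (fun s _ _ => (Real.exp_pos _).le)
  have h3 : ∑ s ∈ P, Real.exp (lam * ∑ x ∈ s, v x - lam * r)
      = Real.exp (- lam * r) * ∑ s ∈ P, Real.exp (lam * ∑ x ∈ s, v x) := by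
    rw [Finset.mul_sum]
    apply Finset.sum_congr rfl
    intro s _
    rw [← Real.exp_add]
    ring_nf
  have h4 := mgf_bound v a ξ lam hξ hv hv0 m hm1 hmn
  calc (F.card : ℝ) ≤ ∑ s ∈ F, Real.exp (lam * ∑ x ∈ s, v x - lam * r) := h1
    _ ≤ ∑ s ∈ P, Real.exp (lam * ∑ x ∈ s, v x - lam * r) := h2
    _ = Real.exp (- lam * r) * ∑ s ∈ P, Real.exp (lam * ∑ x ∈ s, v x) := h3
    _ ≤ Real.exp (- lam * r) * (((Fintype.card α).choose m : ℝ) *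
        Real.exp (lam ^ 2 * ξ ^ 2 * m * ((Fintype.card α : ℝ) - m + 1) / (8 * Fintype.card α))) :=
        mul_le_mul_of_nonneg_left h4 (Real.exp_pos _).le
    _ = _ := by rw [← mul_assoc, mul_comm (Real.exp _), mul_assoc, ← Real.exp_add]; ring_nf

set_option maxHeartbeats 1000000 in
open Classical in
/-- Uniform concentration over a finite net (Serfling + union bound): for tensors
`X̄₁,…,X̄_N` whose per-location losses lie in `[0,ξ]`, with probability at least `1 − δ` over
a uniformly random size-`m` subset `Ω` of `[I]×[J]`, the empirical and full losses of every
`X̄_n` differ by at most `sqrt((ξ² log(2N/δ)/2)(1/m − 1/(IJ) + 1/(IJm)))`. -/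
theorem uniform_concentration_net (I J K N m : ℕ)
    (hI : 0 < I) (hJ : 0 < J) (hK : 0 < K) (hN : 0 < N)
    (hm : 1 ≤ m) (hmIJ : m ≤ I * J)
    (Y : Fin I → Fin J → Fin K → ℝ) (ξ : ℝ) (hξ : 0 < ξ)
    (X : Fin N → Fin I → Fin J → Fin K → ℝ)
    (hbd : ∀ n i j, (1 / (K : ℝ)) * ∑ k, (Y i j k - X n i j k) ^ 2 ≤ ξ)
    (δ : ℝ) (hδ : 0 < δ) (hδ1 : δ < 1) :
    (1 - δ) * ((((Finset.univ : Finset (Fin I × Fin J)).powersetCard m).card : ℝ)) ≤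
    ((((Finset.univ : Finset (Fin I × Fin J)).powersetCard m).filter
        (fun s => ∀ n : Fin N,
          |(1 / ((m : ℝ) * K)) * ∑ p ∈ s, ∑ k, (Y p.1 p.2 k - X n p.1 p.2 k) ^ 2 -
            (1 / ((I : ℝ) * J * K)) * ∑ i, ∑ j, ∑ k, (Y i j k - X n i j k) ^ 2| ≤
          Real.sqrt ((ξ ^ 2 * Real.log (2 * N / δ) / 2) *
            (1 / (m : ℝ) - 1 / ((I : ℝ) * J) + 1 / ((I : ℝ) * J * m))))).card : ℝ) := by
  classical
  have hKr : (0:ℝ) < K := by exact_mod_cast hK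
  have hmr : (0:ℝ) < m := by exact_mod_cast hm
  have hNr : (0:ℝ) < N := by exact_mod_cast hN
  set n : ℕ := I * J with hn
  have hcardα : Fintype.card (Fin I × Fin J) = n := by simp [hn]
  have hn1 : 1 ≤ n := hm.trans hmIJ
  have hnr : (0:ℝ) < n := by exact_mod_cast hn1
  have hmn : m ≤ n := hmIJ
  have hmrn : (m:ℝ) ≤ (n:ℝ) := by exact_mod_cast hmn
  have hnm1 : (0:ℝ) < (n:ℝ) - m + 1 := by linarith
  have hIJ : ((n:ℕ):ℝ) = (I:ℝ) * J := by rw [hn]; push_cast; ring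
  -- weights
  set w : Fin N → (Fin I × Fin J) → ℝ :=
    fun ν p => (1 / (K : ℝ)) * ∑ k, (Y p.1 p.2 k - X ν p.1 p.2 k) ^ 2 with hw
  have hw0 : ∀ ν p, 0 ≤ w ν p := by
    intro ν p
    have : (0:ℝ) ≤ ∑ k, (Y p.1 p.2 k - X ν p.1 p.2 k) ^ 2 :=
      Finset.sum_nonneg fun k _ => sq_nonneg _
    positivity
  have hwξ : ∀ ν p, w ν p ≤ ξ := fun ν p => hbd ν p.1 p.2
  set μ : Fin N → ℝ := fun ν => (∑ p, w ν p) / n with hμ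
  set v : Fin N → (Fin I × Fin J) → ℝ := fun ν p => w ν p - μ ν with hv
  have hvbd : ∀ ν p, -μ ν ≤ v ν p ∧ v ν p ≤ -μ ν + ξ := by
    intro ν p
    constructor
    · have := hw0 ν p; simp only [hv]; linarith
    · have := hwξ ν p; simp only [hv]; linarith
  have hv0 : ∀ ν, ∑ p, v ν p = 0 := by
    intro ν
    simp only [hv]
    rw [Finset.sum_sub_distrib, Finset.sum_const, Finset.card_univ, hcardα, nsmul_eq_mul]
    simp only [hμ]
    field_simp
    ring
  -- identification of the loss difference
  have hL : ∀ ν, (1 / ((I : ℝ) * J * K)) * ∑ i, ∑ j, ∑ k, (Y i j k - X ν i j k) ^ 2 = μ ν := by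
    intro ν
    have hsum : ∑ p : Fin I × Fin J, w ν p
        = (1 / (K:ℝ)) * ∑ i, ∑ j, ∑ k, (Y i j k - X ν i j k) ^ 2 := by
      rw [Finset.mul_sum]
      rw [Fintype.sum_prod_type]
      apply Finset.sum_congr rfl
      intro i _
      rw [Finset.mul_sum]
    have key : ∀ T : ℝ, 1/((I:ℝ)*J*K)*T = (1/(K:ℝ)*T)/((n:ℕ):ℝ) := by
      intro T
      rw [hIJ]
      field_simp
    simp only [hμ, hsum]
    rw [← key]
  have hdiff : ∀ ν (s : Finset (Fin I × Fin J)), s.card = m →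
      (1 / ((m : ℝ) * K)) * ∑ p ∈ s, ∑ k, (Y p.1 p.2 k - X ν p.1 p.2 k) ^ 2 -
        (1 / ((I : ℝ) * J * K)) * ∑ i, ∑ j, ∑ k, (Y i j k - X ν i j k) ^ 2
      = (∑ p ∈ s, v ν p) / m := by
    intro ν s hcard
    rw [hL ν]
    have h1 : ∑ p ∈ s, v ν p = ∑ p ∈ s, w ν p - m * μ ν := by
      simp only [hv]
      rw [Finset.sum_sub_distrib, Finset.sum_const, hcard, nsmul_eq_mul]
    have h2 : ∑ p ∈ s, w ν p
        = (1 / (K:ℝ)) * ∑ p ∈ s, ∑ k, (Y p.1 p.2 k - X ν p.1 p.2 k) ^ 2 := by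
      rw [Finset.mul_sum]
    rw [h1, h2]
    field_simp
  -- parameters
  set t : ℝ := Real.sqrt ((ξ ^ 2 * Real.log (2 * N / δ) / 2) *
      (1 / (m : ℝ) - 1 / ((I : ℝ) * J) + 1 / ((I : ℝ) * J * m))) with htdef
  set Lg : ℝ := Real.log (2 * N / δ) with hLg
  have h2N : (1:ℝ) < 2 * N / δ := by
    rw [lt_div_iff₀ hδ]
    have hN1r : (1:ℝ) ≤ N := by exact_mod_cast hN
    nlinarith
  have hLg0 : 0 < Lg := Real.log_pos h2N
  have hceq : 1 / (m : ℝ) - 1 / ((I : ℝ) * J) + 1 / ((I : ℝ) * J * m)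
      = ((n:ℝ) - m + 1) / ((n:ℝ) * m) := by
    rw [← hIJ]
    field_simp
  have harg : 0 ≤ (ξ ^ 2 * Lg / 2) * (((n:ℝ) - m + 1) / ((n:ℝ) * m)) := by positivity
  have ht2 : t ^ 2 = (ξ ^ 2 * Lg / 2) * (((n:ℝ) - m + 1) / ((n:ℝ) * m)) := by
    rw [htdef, hceq]
    exact Real.sq_sqrt harg
  have ht0 : 0 ≤ t := Real.sqrt_nonneg _
  set lam : ℝ := 4 * (n:ℝ) * t / (ξ ^ 2 * ((n:ℝ) - m + 1)) with hlamdef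
  have hlam0 : 0 ≤ lam := by positivity
  have hexpkey : lam ^ 2 * ξ ^ 2 * m * ((n : ℝ) - m + 1) / (8 * n) - lam * ((m:ℝ) * t)
      = - Lg := by
    have e1 : lam ^ 2 * ξ ^ 2 * m * ((n : ℝ) - m + 1) / (8 * n)
        = 2 * n * m * t ^ 2 / (ξ ^ 2 * ((n:ℝ) - m + 1)) := by
      rw [hlamdef]
      field_simp
      ring
    have e2 : lam * ((m:ℝ) * t) = 4 * n * m * t ^ 2 / (ξ ^ 2 * ((n:ℝ) - m + 1)) := by
      rw [hlamdef]
      field_simp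
    rw [e1, e2, ht2]
    field_simp
    ring
  have hexpL : Real.exp (- Lg) = δ / (2 * N) := by
    rw [hLg, Real.exp_neg, Real.exp_log (by positivity), inv_div]
  -- counting
  set P : Finset (Finset (Fin I × Fin J)) := Finset.powersetCard m Finset.univ with hP
  have hPcard : (P.card : ℝ) = ((n.choose m : ℕ) : ℝ) := by
    rw [hP, Finset.card_powersetCard, Finset.card_univ, hcardα]
  have htail : ∀ (u : (Fin I × Fin J) → ℝ) (a : ℝ),
      (∀ x, a ≤ u x ∧ u x ≤ a + ξ) → (∑ x, u x = 0) →
      (((P.filter (fun s => (m:ℝ) * t < ∑ x ∈ s, u x)).card : ℝ)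
        ≤ (n.choose m : ℝ) * (δ / (2 * N))) := by
    intro u a hu hu0
    have h := tail_count u a ξ lam hξ.le hu hu0 m hm (hcardα ▸ hmn) ((m:ℝ) * t) hlam0
    rw [hcardα] at h
    rw [hexpkey, hexpL] at h
    exact h
  -- per-ν bad sets
  set Bp : Fin N → Finset (Finset (Fin I × Fin J)) :=
    fun ν => P.filter (fun s => (m:ℝ) * t < ∑ x ∈ s, v ν x) with hBp
  set Bm : Fin N → Finset (Finset (Fin I × Fin J)) :=
    fun ν => P.filter (fun s => (m:ℝ) * t < ∑ x ∈ s, (- v ν x)) with hBm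
  have hBpcard : ∀ ν, ((Bp ν).card : ℝ) ≤ (n.choose m : ℝ) * (δ / (2 * N)) := by
    intro ν
    exact htail (v ν) (-μ ν) (hvbd ν) (hv0 ν)
  have hBmcard : ∀ ν, ((Bm ν).card : ℝ) ≤ (n.choose m : ℝ) * (δ / (2 * N)) := by
    intro ν
    apply htail (fun x => - v ν x) (-(-μ ν + ξ))
    · intro x
      obtain ⟨h1, h2⟩ := hvbd ν x
      constructor <;> [linarith; linarith]
    · rw [Finset.sum_neg_distrib, hv0 ν, neg_zero]
  -- the bad set
  set pred : Finset (Fin I × Fin J) → Prop := fun s => ∀ ν : Fin N,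
      |(1 / ((m : ℝ) * K)) * ∑ p ∈ s, ∑ k, (Y p.1 p.2 k - X ν p.1 p.2 k) ^ 2 -
        (1 / ((I : ℝ) * J * K)) * ∑ i, ∑ j, ∑ k, (Y i j k - X ν i j k) ^ 2| ≤ t with hpred
  have hsubset : P.filter (fun s => ¬ pred s) ⊆
      Finset.univ.biUnion (fun ν : Fin N => (Bp ν) ∪ (Bm ν)) := by
    intro s hs
    obtain ⟨hsP, hnp⟩ := Finset.mem_filter.1 hs
    rw [hpred] at hnp
    simp only [not_forall, not_le] at hnp
    obtain ⟨ν, hν⟩ := hnp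
    have hcard : s.card = m := (Finset.mem_powersetCard.1 hsP).2
    rw [hdiff ν s hcard] at hν
    have habs : (m:ℝ) * t < |∑ p ∈ s, v ν p| := by
      rw [abs_div] at hν
      rw [abs_of_pos hmr] at hν
      rw [lt_div_iff₀ hmr] at hν
      linarith [hν]
    apply Finset.mem_biUnion.2
    refine ⟨ν, Finset.mem_univ _, ?_⟩
    rcases lt_abs.1 habs with h | h
    · exact Finset.mem_union_left _ (Finset.mem_filter.2 ⟨hsP, h⟩)
    · refine Finset.mem_union_right _ (Finset.mem_filter.2 ⟨hsP, ?_⟩)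
      rw [Finset.sum_neg_distrib]
      linarith
  have hbadcard : ((P.filter (fun s => ¬ pred s)).card : ℝ) ≤ δ * P.card := by
    have h1 : (P.filter (fun s => ¬ pred s)).card
        ≤ ∑ ν : Fin N, ((Bp ν) ∪ (Bm ν)).card := by
      exact (Finset.card_le_card hsubset).trans (Finset.card_biUnion_le)
    have h2 : ((P.filter (fun s => ¬ pred s)).card : ℝ)
        ≤ ∑ ν : Fin N, (((Bp ν) ∪ (Bm ν)).card : ℝ) := by
      exact_mod_cast h1
    refine h2.trans ?_
    have h3 : ∀ ν : Fin N, (((Bp ν) ∪ (Bm ν)).card : ℝ)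
        ≤ (n.choose m : ℝ) * (δ / N) := by
      intro ν
      have := Finset.card_union_le (Bp ν) (Bm ν)
      have hc : (((Bp ν) ∪ (Bm ν)).card : ℝ) ≤ ((Bp ν).card : ℝ) + ((Bm ν).card : ℝ) := by
        exact_mod_cast this
      refine hc.trans ?_
      have := hBpcard ν
      have := hBmcard ν
      have heq : (n.choose m : ℝ) * (δ / (2 * N)) + (n.choose m : ℝ) * (δ / (2 * N))
          = (n.choose m : ℝ) * (δ / N) := by
        field_simp
        ring
      linarith
    calc ∑ ν : Fin N, (((Bp ν) ∪ (Bm ν)).card : ℝ)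
        ≤ ∑ _ν : Fin N, (n.choose m : ℝ) * (δ / N) := Finset.sum_le_sum (fun ν _ => h3 ν)
      _ = N * ((n.choose m : ℝ) * (δ / N)) := by
          rw [Finset.sum_const, Finset.card_univ, Fintype.card_fin, nsmul_eq_mul]
      _ = δ * P.card := by
          rw [hPcard]
          field_simp
  -- conclude
  have hsplit : (P.filter pred).card + (P.filter (fun s => ¬ pred s)).card = P.card :=
    Finset.card_filter_add_card_filter_not pred
  have hsplit' : ((P.filter pred).card : ℝ) + ((P.filter (fun s => ¬ pred s)).card : ℝ)
      = (P.card : ℝ) := by exact_mod_cast hsplit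
  have hgoal : (1 - δ) * (P.card : ℝ) ≤ ((P.filter pred).card : ℝ) := by
    have hc0 : (0:ℝ) ≤ ((P.filter pred).card : ℝ) := by positivity
    linarith [hbadcard, hsplit']
  exact hgoal
end

section
/- Fix positive integers I, J, K, R, D and reals q, α, β > 0, and let X(R,g) be the solution set for a map g. Let Y = X♮ + N with X♮, N ∈ ℝ^{I×J×K}, and let Ω ⊆ [I]×[J] be nonempty. For a tensor T, let (M∘T) denote the masked tensor with (M∘T)(i,j,:) = T(i,j,:) if (i,j) ∈ Ω and (M∘T)(i,j,:) = 0 otherwise. Define L̂(X̃) = (1/(|Ω|K)) Σ_{(i,j)∈Ω} ‖Y(i,j,:) − X̃(i,j,:)‖₂², L(X̃) = (1/(IJK)) Σ_{(i,j)∈[I]×[J]} ‖Y(i,j,:) − X̃(i,j,:)‖₂², and Gap⋆(Ω) = sup_{X̃∈X(R,g)} |√(L̂(X̃)) − √(L(X̃))|. Let X⋆ ∈ X(R,g) be a minimizer of L̂ over X(R,g), and let X̃* ∈ X(R,g) be a minimizer of ‖X̃ − X♮‖_F over X(R,g), with Err_rep = ‖X̃* − X♮‖_F. Then: (1/√(IJK))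 ‖X⋆ − X♮‖_F ≤ (1/√(IJK)) ‖N‖_F + Gap⋆(Ω) + (1/√(|Ω|K)) ( ‖M∘N‖_F + Err_rep ). -/
/-- The Frobenius norm of a real matrix. -/
noncomputable def frobNorm {m n : ℕ} (X : Matrix (Fin m) (Fin n) ℝ) : ℝ :=
  Real.sqrt (∑ i, ∑ j, X i j ^ 2)

/-- The Frobenius (Euclidean) norm of a tensor in `ℝ^{I×J×K}`. -/
noncomputable def tnorm {I J K : ℕ} (X : Fin I → Fin J → Fin K → ℝ) : ℝ :=
  Real.sqrt (∑ i, ∑ j, ∑ k, X i j k ^ 2)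

/-- The solution set `X(R,g)`: all tensors `Σ_{r=1}^R g(z_r) ∘ c_r` with `‖z_r‖₂ ≤ q` and
`‖c_r‖₂ ≤ α`. -/
def solSet (I J K R D : ℕ) (q α : ℝ) (g : (Fin D → ℝ) → Matrix (Fin I) (Fin J) ℝ) :
    Set (Fin I → Fin J → Fin K → ℝ) :=
  {X | ∃ (z : Fin R → Fin D → ℝ) (c : Fin R → Fin K → ℝ),
    (∀ r, euclNorm (z r) ≤ q) ∧ (∀ r, euclNorm (c r) ≤ α) ∧
    X = fun i j k => ∑ r, g (z r) i j * c r k}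

/-! Through the observations, `‖X⋆ - X♮‖_F ≤ ‖N‖_F + ‖Y - X⋆‖_F`, and `‖Y - X⋆‖_F / √(IJK)` is
`√L(X⋆)`, which exceeds `√L̂(X⋆)` by at most `Gap⋆(Ω)`. Optimality of `X⋆` bounds `√L̂(X⋆)` by
`√L̂(X̃*) = ‖M∘(N + X♮ - X̃*)‖_F / √(|Ω|K)`, and masking only decreases norms. The supremum
`Gap⋆(Ω)` is finite because `‖S ∘ c‖_F = ‖S‖_F ‖c‖₂` bounds every tensor of `X(R,g)` by `Rβα`. -/

open Finset

theorem le_add_ciSup_abs_sub {α : Type*} {S : Set α} {f h : α → ℝ}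
    (hbdd : BddAbove (Set.range fun x : S => |f x - h x|)) {x : α} (hx : x ∈ S) :
    h x ≤ f x + ⨆ y : S, |f y - h y| := by
  have hle := le_ciSup hbdd ⟨x, hx⟩
  have habs := neg_abs_le (f x - h x)
  dsimp only at hle
  linarith

theorem bddAbove_range_abs_sub {α : Type*} {S : Set α} {f h : α → ℝ} {a b : ℝ}
    (hf : ∀ x ∈ S, |f x| ≤ a) (hh : ∀ x ∈ S, |h x| ≤ b) :
    BddAbove (Set.range fun x : S => |f x - h x|) := by
  refine ⟨a + b, ?_⟩
  rintro _ ⟨x, rfl⟩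
  exact (abs_sub _ _).trans (add_le_add (hf x x.2) (hh x x.2))

section TensorNorm

variable {I J K : ℕ}

/-- Flattening a tensor to a Euclidean vector turns `tnorm` into a genuine norm. -/
def tensorToEuclidean :
    (Fin I → Fin J → Fin K → ℝ) →ₗ[ℝ] EuclideanSpace ℝ (Fin I × Fin J × Fin K) where
  toFun T := WithLp.toLp 2 fun p => T p.1 p.2.1 p.2.2
  map_add' _ _ := rfl
  map_smul' _ _ := rfl

theorem tnorm_eq_norm_tensorToEuclidean (T : Fin I → Fin J → Fin K → ℝ) :
    tnorm T = ‖tensorToEuclidean T‖ := by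
  simp only [tnorm, EuclideanSpace.norm_eq, Fintype.sum_prod_type, Real.norm_eq_abs, sq_abs]
  rfl

theorem tnorm_sub_le (A B : Fin I → Fin J → Fin K → ℝ) :
    tnorm (A - B) ≤ tnorm A + tnorm B := by
  simpa only [tnorm_eq_norm_tensorToEuclidean, map_sub] using norm_sub_le _ _

theorem tnorm_sub_comm (A B : Fin I → Fin J → Fin K → ℝ) :
    tnorm (A - B) = tnorm (B - A) := by
  simp only [tnorm_eq_norm_tensorToEuclidean, map_sub, norm_sub_rev]

theorem tnorm_add_le (A B : Fin I → Fin J → Fin K → ℝ) :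
    tnorm (A + B) ≤ tnorm A + tnorm B := by
  simpa only [tnorm_eq_norm_tensorToEuclidean, map_add] using norm_add_le _ _

theorem tnorm_sum_le {ι : Type*} (s : Finset ι) (T : ι → Fin I → Fin J → Fin K → ℝ) :
    tnorm (∑ r ∈ s, T r) ≤ ∑ r ∈ s, tnorm (T r) := by
  simpa only [tnorm_eq_norm_tensorToEuclidean, map_sum] using norm_sum_le _ _

theorem tnorm_outer (S : Matrix (Fin I) (Fin J) ℝ) (c : Fin K → ℝ) :
    tnorm (fun i j k => S i j * c k) = frobNorm S * euclNorm c := by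
  rw [tnorm, frobNorm, euclNorm, ← Real.sqrt_mul (by positivity)]
  simp only [mul_pow, ← mul_sum, sum_mul]

end TensorNorm

section Mask

variable {I J K : ℕ} (Ω : Finset (Fin I × Fin J))

/-- The masked tensor `M ∘ T`, keeping the fibres `T(i,j,:)` with `(i,j) ∈ Ω`. -/
def maskTensor (T : Fin I → Fin J → Fin K → ℝ) : Fin I → Fin J → Fin K → ℝ :=
  fun i j k => if (i, j) ∈ Ω then T i j k else 0

theorem maskTensor_add (A B : Fin I → Fin J → Fin K → ℝ) :
    maskTensor Ω (A + B) = maskTensor Ω A + maskTensor Ω B := by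
  funext i j k
  by_cases h : (i, j) ∈ Ω <;> simp [maskTensor, h]

theorem tnorm_maskTensor_le (T : Fin I → Fin J → Fin K → ℝ) :
    tnorm (maskTensor Ω T) ≤ tnorm T := by
  refine Real.sqrt_le_sqrt (sum_le_sum fun i _ => sum_le_sum fun j _ => sum_le_sum fun k _ => ?_)
  by_cases h : (i, j) ∈ Ω <;> simp [maskTensor, h, sq_nonneg]

theorem sum_sq_maskTensor (T : Fin I → Fin J → Fin K → ℝ) :
    ∑ i, ∑ j, ∑ k, maskTensor Ω T i j k ^ 2 = ∑ p ∈ Ω, ∑ k, T p.1 p.2 k ^ 2 := by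
  have fibre (p : Fin I × Fin J) :
      ∑ k, maskTensor Ω T p.1 p.2 k ^ 2 = if p ∈ Ω then ∑ k, T p.1 p.2 k ^ 2 else 0 := by
    by_cases h : p ∈ Ω <;> simp [maskTensor, h]
  rw [← Fintype.sum_prod_type (f := fun p : Fin I × Fin J => ∑ k, maskTensor Ω T p.1 p.2 k ^ 2)]
  simp only [fibre, sum_ite_mem, univ_inter]

end Mask

theorem tnorm_le_of_mem_solSet {I J K R D : ℕ} {q α β : ℝ}
    {g : (Fin D → ℝ) → Matrix (Fin I) (Fin J) ℝ}
    (hg : ∀ z : Fin D → ℝ, euclNorm z ≤ q → frobNorm (g z) ≤ β)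
    {X : Fin I → Fin J → Fin K → ℝ} (hX : X ∈ solSet I J K R D q α g) :
    tnorm X ≤ R * (β * α) := by
  obtain ⟨z, c, hz, hc, rfl⟩ := hX
  have hsum : (fun i j k => ∑ r, g (z r) i j * c r k) =
      ∑ r, fun i j k => g (z r) i j * c r k := by
    funext i j k
    simp only [Finset.sum_apply]
  calc tnorm (fun i j k => ∑ r, g (z r) i j * c r k)
      ≤ ∑ r, frobNorm (g (z r)) * euclNorm (c r) := by
        simpa only [hsum, tnorm_outer] using
          tnorm_sum_le univ fun r i j k => g (z r) i j * c r k
    _ ≤ ∑ _r : Fin R, β * α := sum_le_sum fun r _ =>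
        mul_le_mul (hg _ (hz r)) (hc r) (Real.sqrt_nonneg _)
          ((Real.sqrt_nonneg _).trans (hg _ (hz r)))
    _ = R * (β * α) := by simp

section Loss

variable {I J K : ℕ} (Ω : Finset (Fin I × Fin J)) (Y : Fin I → Fin J → Fin K → ℝ)

/-- The empirical loss `L̂`, on the observed fibres `Ω`. -/
noncomputable def empiricalLoss (X : Fin I → Fin J → Fin K → ℝ) : ℝ :=
  (1 / ((Ω.card : ℝ) * K)) * ∑ p ∈ Ω, ∑ k, (Y p.1 p.2 k - X p.1 p.2 k) ^ 2

/-- The population loss `L`, on all fibres. -/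
noncomputable def fullLoss (X : Fin I → Fin J → Fin K → ℝ) : ℝ :=
  (1 / ((I : ℝ) * J * K)) * ∑ i, ∑ j, ∑ k, (Y i j k - X i j k) ^ 2

theorem sqrt_empiricalLoss (X : Fin I → Fin J → Fin K → ℝ) :
    √(empiricalLoss Ω Y X) = (1 / √((Ω.card : ℝ) * K)) * tnorm (maskTensor Ω (Y - X)) := by
  rw [empiricalLoss, tnorm, sum_sq_maskTensor, Real.sqrt_mul (by positivity), one_div,
    Real.sqrt_inv, one_div]
  rfl

theorem sqrt_fullLoss (X : Fin I → Fin J → Fin K → ℝ) :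
    √(fullLoss Y X) = (1 / √((I : ℝ) * J * K)) * tnorm (Y - X) := by
  rw [fullLoss, tnorm, Real.sqrt_mul (by positivity), one_div, Real.sqrt_inv, one_div]
  rfl

theorem sqrt_empiricalLoss_le (Xnat Noise X : Fin I → Fin J → Fin K → ℝ) :
    √(empiricalLoss Ω (Xnat + Noise) X) ≤
      (1 / √((Ω.card : ℝ) * K)) * (tnorm (maskTensor Ω Noise) + tnorm (X - Xnat)) := by
  have hsplit : Xnat + Noise - X = Noise + (Xnat - X) := by abel
  rw [sqrt_empiricalLoss, hsplit, maskTensor_add, tnorm_sub_comm X]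
  gcongr
  exact (tnorm_add_le _ _).trans (add_le_add_right (tnorm_maskTensor_le _ _) _)

end Loss

/-- `Gap⋆(Ω)` is a genuine supremum, not the junk value of an unbounded `⨆`. -/
theorem bddAbove_gap {I J K R D : ℕ} {q α β : ℝ} {g : (Fin D → ℝ) → Matrix (Fin I) (Fin J) ℝ}
    (hg : ∀ z : Fin D → ℝ, euclNorm z ≤ q → frobNorm (g z) ≤ β)
    (Ω : Finset (Fin I × Fin J)) (Y : Fin I → Fin J → Fin K → ℝ) :
    BddAbove (Set.range fun X : solSet I J K R D q α g =>
      |√(empiricalLoss Ω Y X) - √(fullLoss Y X)|) := by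
  have hdist {X} (hX : X ∈ solSet I J K R D q α g) : tnorm (Y - X) ≤ tnorm Y + R * (β * α) :=
    (tnorm_sub_le _ _).trans (add_le_add_right (tnorm_le_of_mem_solSet hg hX) _)
  refine bddAbove_range_abs_sub (f := fun X => √(empiricalLoss Ω Y X))
    (h := fun X => √(fullLoss Y X))
    (a := 1 / √((Ω.card : ℝ) * K) * (tnorm Y + R * (β * α)))
    (b := 1 / √((I : ℝ) * J * K) * (tnorm Y + R * (β * α))) (fun X hX => ?_) (fun X hX => ?_)
  · rw [abs_of_nonneg (Real.sqrt_nonneg _), sqrt_empiricalLoss]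
    gcongr
    exact (tnorm_maskTensor_le _ _).trans (hdist hX)
  · rw [abs_of_nonneg (Real.sqrt_nonneg _), sqrt_fullLoss]
    gcongr
    exact hdist hX

theorem recoverability_decomposition_general (I J K R D : ℕ)
    (q α β : ℝ)
    (g : (Fin D → ℝ) → Matrix (Fin I) (Fin J) ℝ)
    (hg : ∀ z : Fin D → ℝ, euclNorm z ≤ q → frobNorm (g z) ≤ β)
    (Xnat Noise Y : Fin I → Fin J → Fin K → ℝ) (hY : Y = Xnat + Noise)
    (Ω : Finset (Fin I × Fin J))
    (Xstar : Fin I → Fin J → Fin K → ℝ) (hXstar : Xstar ∈ solSet I J K R D q α g)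
    (hminE : ∀ X ∈ solSet I J K R D q α g,
      (1 / ((Ω.card : ℝ) * K)) * ∑ p ∈ Ω, ∑ k, (Y p.1 p.2 k - Xstar p.1 p.2 k) ^ 2 ≤
        (1 / ((Ω.card : ℝ) * K)) * ∑ p ∈ Ω, ∑ k, (Y p.1 p.2 k - X p.1 p.2 k) ^ 2)
    (Xast : Fin I → Fin J → Fin K → ℝ) (hXast : Xast ∈ solSet I J K R D q α g) :
    (1 / Real.sqrt ((I : ℝ) * J * K)) * tnorm (Xstar - Xnat) ≤
      (1 / Real.sqrt ((I : ℝ) * J * K)) * tnorm Noise +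
      (⨆ X : ↥(solSet I J K R D q α g),
        |Real.sqrt ((1 / ((Ω.card : ℝ) * K)) *
            ∑ p ∈ Ω, ∑ k, (Y p.1 p.2 k - X.1 p.1 p.2 k) ^ 2) -
          Real.sqrt ((1 / ((I : ℝ) * J * K)) *
            ∑ i, ∑ j, ∑ k, (Y i j k - X.1 i j k) ^ 2)|) +
      (1 / Real.sqrt ((Ω.card : ℝ) * K)) *
        (tnorm (fun i j k => if (i, j) ∈ Ω then Noise i j k else 0) +
          tnorm (Xast - Xnat)) := by
  subst hY
  set gap := ⨆ X : solSet I J K R D q α g,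
    |√(empiricalLoss Ω (Xnat + Noise) X) - √(fullLoss (Xnat + Noise) X)|
  have hresidual : Xstar - Xnat = Noise - (Xnat + Noise - Xstar) := by abel
  have hgap := le_add_ciSup_abs_sub (f := fun X => √(empiricalLoss Ω (Xnat + Noise) X))
    (h := fun X => √(fullLoss (Xnat + Noise) X)) (bddAbove_gap hg Ω (Xnat + Noise)) hXstar
  have hmin : √(empiricalLoss Ω (Xnat + Noise) Xstar) ≤ √(empiricalLoss Ω (Xnat + Noise) Xast) :=
    Real.sqrt_le_sqrt (hminE Xast hXast)
  have hobserved := sqrt_empiricalLoss_le Ω Xnat Noise Xast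
  calc (1 / √((I : ℝ) * J * K)) * tnorm (Xstar - Xnat)
      ≤ (1 / √((I : ℝ) * J * K)) * (tnorm Noise + tnorm (Xnat + Noise - Xstar)) := by
        rw [hresidual]
        gcongr
        exact tnorm_sub_le _ _
    _ = (1 / √((I : ℝ) * J * K)) * tnorm Noise + √(fullLoss (Xnat + Noise) Xstar) := by
        rw [sqrt_fullLoss, mul_add]
    _ ≤ (1 / √((I : ℝ) * J * K)) * tnorm Noise + gap +
          (1 / √((Ω.card : ℝ) * K)) * (tnorm (maskTensor Ω Noise) + tnorm (Xast - Xnat)) := by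
        linarith

/-- The deterministic error decomposition of Theorem 2 (Recoverability): if `X⋆` minimizes the
empirical loss over `X(R,g)` and `X̃*` is the best approximation of `X♮` within `X(R,g)`, then
`(1/√(IJK))‖X⋆ − X♮‖_F ≤ (1/√(IJK))‖N‖_F + Gap⋆(Ω) + (‖M∘N‖_F + Err_rep)/√(|Ω|K)`. -/
theorem recoverability_decomposition (I J K R D : ℕ)
    (hI : 0 < I) (hJ : 0 < J) (hK : 0 < K) (hR : 0 < R) (hD : 0 < D)
    (q α β : ℝ) (hq : 0 < q) (hα : 0 < α) (hβ : 0 < β)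
    (g : (Fin D → ℝ) → Matrix (Fin I) (Fin J) ℝ)
    (hg : ∀ z : Fin D → ℝ, euclNorm z ≤ q → frobNorm (g z) ≤ β)
    (Xnat Noise Y : Fin I → Fin J → Fin K → ℝ) (hY : Y = Xnat + Noise)
    (Ω : Finset (Fin I × Fin J)) (hΩ : Ω.Nonempty)
    (Xstar : Fin I → Fin J → Fin K → ℝ) (hXstar : Xstar ∈ solSet I J K R D q α g)
    (hminE : ∀ X ∈ solSet I J K R D q α g,
      (1 / ((Ω.card : ℝ) * K)) * ∑ p ∈ Ω, ∑ k, (Y p.1 p.2 k - Xstar p.1 p.2 k) ^ 2 ≤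
        (1 / ((Ω.card : ℝ) * K)) * ∑ p ∈ Ω, ∑ k, (Y p.1 p.2 k - X p.1 p.2 k) ^ 2)
    (Xast : Fin I → Fin J → Fin K → ℝ) (hXast : Xast ∈ solSet I J K R D q α g)
    (hminR : ∀ X ∈ solSet I J K R D q α g, tnorm (Xast - Xnat) ≤ tnorm (X - Xnat)) :
    (1 / Real.sqrt ((I : ℝ) * J * K)) * tnorm (Xstar - Xnat) ≤
      (1 / Real.sqrt ((I : ℝ) * J * K)) * tnorm Noise +
      (⨆ X : ↥(solSet I J K R D q α g),
        |Real.sqrt ((1 / ((Ω.card : ℝ) * K)) *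
            ∑ p ∈ Ω, ∑ k, (Y p.1 p.2 k - X.1 p.1 p.2 k) ^ 2) -
          Real.sqrt ((1 / ((I : ℝ) * J * K)) *
            ∑ i, ∑ j, ∑ k, (Y i j k - X.1 i j k) ^ 2)|) +
      (1 / Real.sqrt ((Ω.card : ℝ) * K)) *
        (tnorm (fun i j k => if (i, j) ∈ Ω then Noise i j k else 0) +
          tnorm (Xast - Xnat)) :=
  recoverability_decomposition_general I J K R D q α β g hg Xnat Noise Y hY Ω Xstar hXstar hminE
    Xast hXast
end
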